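/- arXiv:1911.01593 — 9 statements merged into one kernel-verified Lean document; each statement's English description precedes it below -/
import Mathlib

section
/- For every natural number n ≥ 1, letting z = e^{iπ/(2n)}, the sum ∑_{i=0}^{n-1} |1 - z^{n+2i+1}|² equals 2n + 2/sin(π/(2n)). -/
open Complex Finset

theorem stmt_2 (n : ℕ) (hn : 1 ≤ n) :
    let z : ℂ := Complex.exp (Real.pi * Complex.I / (2 * n))
    ∑ i ∈ Finset.range n, (‖1 - z ^ (n + 2 * i + 1)‖) ^ 2 =
      2 * n + 2 / Real.sin (Real.pi / (2 * n)) := by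
  intro z
  have hn0 : (n : ℝ) ≠ 0 := by positivity
  have hn0c : (n : ℂ) ≠ 0 := by exact_mod_cast Nat.cast_ne_zero.mpr (by omega)
  have h1n : (1 : ℝ) ≤ n := by exact_mod_cast hn
  set θ : ℝ := Real.pi / (2 * n) with hθ
  have hθpos : 0 < θ := by
    apply div_pos Real.pi_pos
    positivity
  have hθlt : θ < Real.pi := by
    rw [hθ, div_lt_iff₀ (by positivity)]
    nlinarith [Real.pi_pos]
  have hsin : 0 < Real.sin θ := Real.sin_pos_of_pos_of_lt_pi hθpos hθlt
  -- per-term computation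
  have key : ∀ i : ℕ, (‖1 - z ^ (n + 2 * i + 1)‖) ^ 2
      = 2 + 2 * Real.sin ((2 * i + 1) * θ) := by
    intro i
    have hz : z ^ (n + 2 * i + 1)
        = Complex.exp (↑(((n : ℝ) + 2 * i + 1) * θ) * Complex.I) := by
      show Complex.exp (Real.pi * Complex.I / (2 * n)) ^ (n + 2 * i + 1) = _
      rw [← Complex.exp_nat_mul]
      congr 1
      rw [hθ]
      push_cast
      field_simp
    rw [hz, Complex.sq_norm, Complex.normSq_apply]
    simp only [Complex.sub_re, Complex.sub_im, Complex.one_re, Complex.one_im,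
      Complex.exp_ofReal_mul_I_re, Complex.exp_ofReal_mul_I_im]
    have hang : ((n : ℝ) + 2 * i + 1) * θ = Real.pi / 2 + (2 * i + 1) * θ := by
      have hnθ : (n : ℝ) * θ = Real.pi / 2 := by
        rw [hθ]; field_simp
      nlinarith [hnθ]
    rw [hang, Real.cos_add, Real.sin_add, Real.cos_pi_div_two, Real.sin_pi_div_two]
    have h1 := Real.sin_sq_add_cos_sq ((2 * i + 1) * θ)
    nlinarith [h1]
  have hsum : ∑ i ∈ Finset.range n, (‖1 - z ^ (n + 2 * i + 1)‖) ^ 2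
      = 2 * n + 2 * ∑ i ∈ Finset.range n, Real.sin ((2 * i + 1) * θ) := by
    rw [Finset.sum_congr rfl (fun i _ => key i), Finset.sum_add_distrib,
      Finset.sum_const, Finset.card_range, ← Finset.mul_sum]
    push_cast
    ring
  rw [hsum]
  -- telescoping sum
  have hS : ∑ i ∈ Finset.range n, Real.sin ((2 * i + 1) * θ) = 1 / Real.sin θ := by
    set f : ℕ → ℝ := fun i => Real.cos (2 * i * θ) with hf
    have hterm : ∀ i : ℕ, Real.sin θ * Real.sin ((2 * i + 1) * θ)
        = (f i - f (i + 1)) / 2 := by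
      intro i
      simp only [hf]
      push_cast
      rw [show (2 : ℝ) * i * θ = (2 * i + 1) * θ - θ by ring,
          show (2 : ℝ) * (i + 1) * θ = (2 * i + 1) * θ + θ by ring,
          Real.cos_sub, Real.cos_add]
      ring
    have hmul : Real.sin θ * ∑ i ∈ Finset.range n, Real.sin ((2 * i + 1) * θ) = 1 := by
      rw [Finset.mul_sum, Finset.sum_congr rfl (fun i _ => hterm i), ← Finset.sum_div,
        Finset.sum_range_sub' f]
      simp only [hf]
      have h2 : 2 * (n : ℝ) * θ = Real.pi := by
        rw [hθ]; field_simp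
      rw [h2]
      norm_num [Real.cos_pi]
    rw [eq_div_iff hsin.ne']
    linear_combination hmul
  rw [hS]
  rw [hθ]
  ring
end

section
/- In the group G_n = ⟨P₀, P₁, J | P₀ⁿ = P₁ⁿ = Jⁿ = 1, J central, Jⁱ(P₀ⁱP₁⁻ⁱ)² = 1 for i = 1, ..., ⌊n/2⌋⟩, the elements P₀ⁱP₁⁻ⁱ and P₀ʲP₁⁻ʲ commute for all integers i, j. -/
/-!
Write `t k = a ^ k * b ^ (-k)`. The relations say `t k ^ 2 = c ^ (-k)` for `0 ≤ k ≤ n / 2`.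
This extends to every `k : ℤ`, because `t k` depends only on `k` mod `n` and `t (-k)` is
conjugate to `(t k)⁻¹`. Since `(t i)⁻¹ * t j` is conjugate to `t (j - i)`, writing
`t i * t j = t i ^ 2 * ((t i)⁻¹ * t j)` gives `(t i * t j) ^ 2 = c ^ (-i - j) = t i ^ 2 * t j ^ 2`,
and cancelling yields `t j * t i = t i * t j`.
-/

open FreeGroup

/-- Free-group generators: `0 ↦ P₀`, `1 ↦ P₁`, `2 ↦ J`. -/
def chshRels (n : ℕ) : Set (FreeGroup (Fin 3)) :=
  {w | w = (FreeGroup.of 0) ^ n ∨ w = (FreeGroup.of 1) ^ n ∨ w = (FreeGroup.of 2) ^ n ∨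
    w = (FreeGroup.of 2) * (FreeGroup.of 0) * (FreeGroup.of 2)⁻¹ * (FreeGroup.of 0)⁻¹ ∨
    w = (FreeGroup.of 2) * (FreeGroup.of 1) * (FreeGroup.of 2)⁻¹ * (FreeGroup.of 1)⁻¹ ∨
    ∃ i : ℕ, 1 ≤ i ∧ i ≤ n / 2 ∧
      w = (FreeGroup.of 2) ^ i * ((FreeGroup.of 0) ^ i * ((FreeGroup.of 1) ^ i)⁻¹) ^ 2}

/-- The group `G_n` of the generalized CHSH game. -/
def Gn (n : ℕ) : Type := PresentedGroup (chshRels n)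

instance (n : ℕ) : Group (Gn n) := by unfold Gn; infer_instance

section
variable {G : Type*} [Group G]

theorem commute_of_mul_sq_eq_sq_mul_sq {x y : G} (h : (x * y) ^ 2 = x ^ 2 * y ^ 2) :
    Commute x y := by
  rw [sq, sq, sq, mul_assoc, mul_assoc, mul_left_cancel_iff, ← mul_assoc, ← mul_assoc,
    mul_right_cancel_iff] at h
  exact h.symm

theorem zpow_add_mul_of_pow_eq_one {x : G} {n : ℕ} (hx : x ^ n = 1) (k q : ℤ) :
    x ^ (k + n * q) = x ^ k := by
  rw [zpow_add, zpow_mul, zpow_natCast, hx, one_zpow, mul_one]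

theorem zpow_mul_zpow_neg_inv_mul (a b : G) (i j : ℤ) :
    (a ^ i * b ^ (-i))⁻¹ * (a ^ j * b ^ (-j)) =
      b ^ i * (a ^ (j - i) * b ^ (-(j - i))) * (b ^ i)⁻¹ := by
  group

variable {a b c : G}

theorem zpow_mul_zpow_neg_mem_centralizer (hca : Commute c a) (hcb : Commute c b) (k : ℤ) :
    a ^ k * b ^ (-k) ∈ Subgroup.centralizer {c} := by
  have ha : a ∈ Subgroup.centralizer {c} := Subgroup.mem_centralizer_singleton_iff.2 hca.eq.symm
  have hb : b ∈ Subgroup.centralizer {c} := Subgroup.mem_centralizer_singleton_iff.2 hcb.eq.symm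
  exact mul_mem (zpow_mem ha k) (zpow_mem hb (-k))

theorem zpow_mul_zpow_neg_sq_neg (hcb : Commute c b) {k : ℤ}
    (hk : (a ^ k * b ^ (-k)) ^ 2 = c ^ (-k)) :
    (a ^ (-k) * b ^ (-(-k))) ^ 2 = c ^ (-(-k)) := by
  have hconj : a ^ (-k) * b ^ (-(-k)) = b ^ (-k) * (a ^ k * b ^ (-k))⁻¹ * (b ^ (-k))⁻¹ := by
    group
  rw [hconj, conj_pow, inv_pow, hk, ← zpow_neg, (hcb.zpow_zpow _ _).symm.eq,
    mul_inv_cancel_right]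

theorem zpow_mul_zpow_neg_sq_add_mul {n : ℕ} (ha : a ^ n = 1) (hb : b ^ n = 1) (hc : c ^ n = 1)
    {k : ℤ} (hk : (a ^ k * b ^ (-k)) ^ 2 = c ^ (-k)) (q : ℤ) :
    (a ^ (k + n * q) * b ^ (-(k + n * q))) ^ 2 = c ^ (-(k + n * q)) := by
  rw [show -(k + n * q) = -k + n * -q by ring, zpow_add_mul_of_pow_eq_one ha,
    zpow_add_mul_of_pow_eq_one hb, zpow_add_mul_of_pow_eq_one hc, hk]

theorem zpow_mul_zpow_neg_sq {n : ℕ} (hn : 0 < n) (ha : a ^ n = 1) (hb : b ^ n = 1)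
    (hc : c ^ n = 1) (hcb : Commute c b)
    (hrel : ∀ k : ℕ, 1 ≤ k → k ≤ n / 2 → c ^ k * (a ^ k * (b ^ k)⁻¹) ^ 2 = 1) (k : ℤ) :
    (a ^ k * b ^ (-k)) ^ 2 = c ^ (-k) := by
  have hsmall (m : ℕ) (hm : m ≤ n / 2) :
      (a ^ (m : ℤ) * b ^ (-(m : ℤ))) ^ 2 = c ^ (-(m : ℤ)) := by
    rcases Nat.eq_zero_or_pos m with rfl | hm0
    · simp
    · rw [zpow_neg, zpow_neg, zpow_natCast, zpow_natCast, zpow_natCast]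
      exact eq_inv_of_mul_eq_one_right (hrel m hm0 hm)
  rw [← Int.emod_add_mul_ediv k n]
  refine zpow_mul_zpow_neg_sq_add_mul ha hb hc ?_ _
  obtain ⟨r, hr⟩ := Int.eq_ofNat_of_zero_le (Int.emod_nonneg k (Int.natCast_ne_zero.2 hn.ne'))
  have hrn : r < n := by have := Int.emod_lt_of_pos k (Int.natCast_pos.2 hn); omega
  rw [hr]
  by_cases hr2 : r ≤ n / 2
  · exact hsmall r hr2
  · have h := zpow_mul_zpow_neg_sq_add_mul ha hb hc
      (zpow_mul_zpow_neg_sq_neg hcb (hsmall (n - r) (by omega))) 1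
    rwa [show -((n - r : ℕ) : ℤ) + n * 1 = r by omega] at h

theorem commute_zpow_mul_zpow_neg (hca : Commute c a) (hcb : Commute c b)
    (hsq : ∀ k : ℤ, (a ^ k * b ^ (-k)) ^ 2 = c ^ (-k)) (i j : ℤ) :
    Commute (a ^ i * b ^ (-i)) (a ^ j * b ^ (-j)) := by
  set x := a ^ i * b ^ (-i)
  set y := a ^ j * b ^ (-j)
  have hx : x ^ 2 = c ^ (-i) := hsq i
  have hy : y ^ 2 = c ^ (-j) := hsq j
  have hcz : Commute (c ^ (-i)) (x⁻¹ * y) := by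
    refine Commute.zpow_left (Subgroup.mem_centralizer_singleton_iff.1 ?_).symm _
    exact mul_mem (inv_mem (zpow_mul_zpow_neg_mem_centralizer hca hcb i))
      (zpow_mul_zpow_neg_mem_centralizer hca hcb j)
  have hz : (x⁻¹ * y) ^ 2 = c ^ (i - j) := by
    rw [zpow_mul_zpow_neg_inv_mul, conj_pow, hsq, (hcb.zpow_zpow _ i).symm.eq,
      mul_inv_cancel_right, neg_sub]
  refine commute_of_mul_sq_eq_sq_mul_sq ?_
  calc (x * y) ^ 2 = (c ^ (-i) * (x⁻¹ * y)) ^ 2 := by rw [← hx]; group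
    _ = (c ^ (-i)) ^ 2 * c ^ (i - j) := by rw [hcz.mul_pow, hz]
    _ = c ^ (-i) * c ^ (-j) := by group
    _ = x ^ 2 * y ^ 2 := by rw [hx, hy]

end

theorem stmt_5 (n : ℕ) (hn : 2 ≤ n) (i j : ℤ) :
    Commute
      ((PresentedGroup.of (rels := chshRels n) 0 : Gn n) ^ i *
        (PresentedGroup.of (rels := chshRels n) 1 : Gn n) ^ (-i))
      ((PresentedGroup.of (rels := chshRels n) 0 : Gn n) ^ j *
        (PresentedGroup.of (rels := chshRels n) 1 : Gn n) ^ (-j)) := by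
  have hgen {x : Fin 3} (hx : of x ^ n ∈ chshRels n) : (PresentedGroup.of x : Gn n) ^ n = 1 := by
    have h := PresentedGroup.one_of_mem hx
    rw [map_pow] at h
    exact h
  have hcomm {x : Fin 3} (hx : of 2 * of x * (of 2)⁻¹ * (of x)⁻¹ ∈ chshRels n) :
      Commute (PresentedGroup.of 2 : Gn n) (PresentedGroup.of x) := by
    have h := PresentedGroup.one_of_mem hx
    simp only [_root_.map_mul, _root_.map_inv] at h
    exact commutatorElement_eq_one_iff_commute.1 h
  have hrel (k : ℕ) (hk : 1 ≤ k) (hkn : k ≤ n / 2) :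
      (PresentedGroup.of 2 : Gn n) ^ k *
        ((PresentedGroup.of 0) ^ k * ((PresentedGroup.of 1) ^ k)⁻¹) ^ 2 = 1 := by
    have h := PresentedGroup.one_of_mem (rels := chshRels n)
      (Or.inr (Or.inr (Or.inr (Or.inr (Or.inr ⟨k, hk, hkn, rfl⟩)))))
    simp only [_root_.map_mul, map_pow, _root_.map_inv] at h
    exact h
  have hca := hcomm (x := 0) (Or.inr (Or.inr (Or.inr (Or.inl rfl))))
  have hcb := hcomm (x := 1) (Or.inr (Or.inr (Or.inr (Or.inr (Or.inl rfl)))))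
  exact commute_zpow_mul_zpow_neg hca hcb
    (zpow_mul_zpow_neg_sq (by omega) (hgen (Or.inl rfl)) (hgen (Or.inr (Or.inl rfl)))
      (hgen (Or.inr (Or.inr (Or.inl rfl)))) hcb hrel) i j
end

section
/- In the group G_n defined by the presentation ⟨P₀, P₁, J | P₀ⁿ, P₁ⁿ, Jⁿ, [J,P₀], [J,P₁], Jⁱ(P₀ⁱP₁⁻ⁱ)² for 1 ≤ i ≤ ⌊n/2⌋⟩, every element can be written in the form Jⁱ P₀ʲ (P₀P₁⁻¹)^{q₁} (P₀²P₁⁻²)^{q₂} ⋯ (P₀^{n-1}P₁^{-(n-1)})^{q_{n-1}} with i, j ∈ {0,...,n-1} and each q_k ∈ {0,1}. -/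
open FreeGroup
namespace Aux
variable {n : ℕ}

theorem rel_one {r : FreeGroup (Fin 3)} (hr : r ∈ chshRels n) :
    PresentedGroup.mk (chshRels n) r = 1 :=
  (QuotientGroup.eq_one_iff _).mpr (Subgroup.subset_normalClosure hr)

abbrev X : PresentedGroup (chshRels n) := PresentedGroup.of 0
abbrev Y : PresentedGroup (chshRels n) := PresentedGroup.of 1
abbrev Jc : PresentedGroup (chshRels n) := PresentedGroup.of 2
abbrev a (i : ℕ) : PresentedGroup (chshRels n) := X ^ i * (Y ^ i)⁻¹

theorem xn : (X : PresentedGroup (chshRels n)) ^ n = 1 := by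
  have h := rel_one (n := n) (r := FreeGroup.of 0 ^ n) (Or.inl rfl)
  rw [map_pow] at h; exact h
theorem yn : (Y : PresentedGroup (chshRels n)) ^ n = 1 := by
  have h := rel_one (n := n) (r := FreeGroup.of 1 ^ n) (Or.inr (Or.inl rfl))
  rw [map_pow] at h; exact h
theorem jn : (Jc : PresentedGroup (chshRels n)) ^ n = 1 := by
  have h := rel_one (n := n) (r := FreeGroup.of 2 ^ n) (Or.inr (Or.inr (Or.inl rfl)))
  rw [map_pow] at h; exact h

theorem comJX : Commute (Jc : PresentedGroup (chshRels n)) X := by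
  have h := rel_one (n := n) (Or.inr (Or.inr (Or.inr (Or.inl rfl))))
  have h' : Jc * X * Jc⁻¹ * X⁻¹ = (1 : PresentedGroup (chshRels n)) := h
  have h2 : Jc * X * Jc⁻¹ = (X : PresentedGroup (chshRels n)) := by
    rwa [mul_inv_eq_one] at h' 
  exact mul_inv_eq_iff_eq_mul.mp h2

theorem comJY : Commute (Jc : PresentedGroup (chshRels n)) Y := by
  have h := rel_one (n := n) (Or.inr (Or.inr (Or.inr (Or.inr (Or.inl rfl)))))
  have h' : Jc * Y * Jc⁻¹ * Y⁻¹ = (1 : PresentedGroup (chshRels n)) := h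
  have h2 : Jc * Y * Jc⁻¹ = (Y : PresentedGroup (chshRels n)) := by
    rwa [mul_inv_eq_one] at h' 
  exact mul_inv_eq_iff_eq_mul.mp h2

theorem comJa (i : ℕ) : Commute (Jc : PresentedGroup (chshRels n)) (a i) :=
  ((comJX.pow_right i).mul_right ((comJY.pow_right i).inv_right))

theorem a0 : (a 0 : PresentedGroup (chshRels n)) = 1 := by
  show (X:PresentedGroup (chshRels n)) ^ 0 * ((Y:PresentedGroup (chshRels n)) ^ 0)⁻¹ = 1
  simp

theorem powx_red (m : ℕ) : (X : PresentedGroup (chshRels n)) ^ m = X ^ (m % n) := by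
  conv_lhs => rw [← Nat.div_add_mod m n]
  rw [pow_add, pow_mul, xn, one_pow, one_mul]
theorem powy_red (m : ℕ) : (Y : PresentedGroup (chshRels n)) ^ m = Y ^ (m % n) := by
  conv_lhs => rw [← Nat.div_add_mod m n]
  rw [pow_add, pow_mul, yn, one_pow, one_mul]
theorem powj_red (m : ℕ) : (Jc : PresentedGroup (chshRels n)) ^ m = Jc ^ (m % n) := by
  conv_lhs => rw [← Nat.div_add_mod m n]
  rw [pow_add, pow_mul, jn, one_pow, one_mul]

theorem a_red (m : ℕ) : (a m : PresentedGroup (chshRels n)) = a (m % n) := by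
  show (X:PresentedGroup (chshRels n)) ^ m * (Y ^ m)⁻¹ = X ^ (m % n) * (Y ^ (m % n))⁻¹
  rw [powx_red, powy_red]

theorem asq_le (i : ℕ) (h1 : 1 ≤ i) (h2 : i ≤ n / 2) :
    (a i : PresentedGroup (chshRels n)) ^ 2 * Jc ^ i = 1 := by
  have h := rel_one (n := n) (Or.inr (Or.inr (Or.inr (Or.inr (Or.inr ⟨i, h1, h2, rfl⟩)))))
  have h : (Jc:PresentedGroup (chshRels n)) ^ i * (X ^ i * (Y ^ i)⁻¹) ^ 2 = 1 := h
  have hc : Commute ((Jc : PresentedGroup (chshRels n)) ^ i) ((a i) ^ 2) :=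
    ((comJa i).pow_right 2).pow_left i
  calc (a i : PresentedGroup (chshRels n)) ^ 2 * Jc ^ i
      = Jc ^ i * (a i) ^ 2 := (hc).symm.eq
    _ = 1 := h

section generic
variable {G : Type*} [Group G]
theorem gsq (v w : G) : (v⁻¹ * w⁻¹ * v) * (v⁻¹ * w⁻¹ * v) = v⁻¹ * (w * w)⁻¹ * v := by group
theorem gconj2 (v w : G) : (v * w * v⁻¹) * (v * w * v⁻¹) = v * (w * w) * v⁻¹ := by group
end generic

theorem asq (hn0 : 0 < n) (i : ℕ) : (a i : PresentedGroup (chshRels n)) ^ 2 * Jc ^ i = 1 := by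
  rw [a_red, powj_red]
  set m := i % n with hm
  have hmn : m < n := Nat.mod_lt _ hn0
  rcases Nat.eq_zero_or_pos m with h0 | h1
  · rw [h0, a0, one_pow, pow_zero, one_mul]
  rcases le_or_gt m (n / 2) with hle | hgt
  · exact asq_le m h1 hle
  · set k := n - m with hk
    have hk1 : 1 ≤ k := by omega
    have hk2 : k ≤ n / 2 := by omega
    have hkm : k + m = n := by omega
    have hxm : (X : PresentedGroup (chshRels n)) ^ m = (X ^ k)⁻¹ := by
      apply eq_inv_of_mul_eq_one_right
      rw [← pow_add, hkm, xn]
    have hym : ((Y : PresentedGroup (chshRels n)) ^ m)⁻¹ = Y ^ k := by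
      have h2 : (Y : PresentedGroup (chshRels n)) ^ m = (Y ^ k)⁻¹ := by
        apply eq_inv_of_mul_eq_one_left
        rw [← pow_add, (by omega : m + k = n), yn]
      rw [h2, inv_inv]
    have ham : (a m : PresentedGroup (chshRels n)) = (X ^ k)⁻¹ * (a k)⁻¹ * X ^ k := by
      show (X : PresentedGroup (chshRels n)) ^ m * (Y ^ m)⁻¹ = _
      rw [hxm, hym]
      show _ = (X ^ k)⁻¹ * ((X:PresentedGroup (chshRels n)) ^ k * (Y ^ k)⁻¹)⁻¹ * X ^ k
      group
    have aks2 : (((a k : PresentedGroup (chshRels n))) ^ 2)⁻¹ = Jc ^ k :=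
      inv_eq_of_mul_eq_one_right (asq_le k hk1 hk2)
    have key : (a m : PresentedGroup (chshRels n)) ^ 2 = (X ^ k)⁻¹ * Jc ^ k * X ^ k := by
      calc (a m : PresentedGroup (chshRels n)) ^ 2
          = ((X ^ k)⁻¹ * (a k)⁻¹ * X ^ k) * ((X ^ k)⁻¹ * (a k)⁻¹ * X ^ k) := by
            rw [pow_two, ham]
        _ = (X ^ k)⁻¹ * ((a k) ^ 2)⁻¹ * X ^ k := by
            rw [pow_two]
            exact gsq (X ^ k) (a k)
        _ = (X ^ k)⁻¹ * Jc ^ k * X ^ k := by rw [aks2]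
    have hcom : (Jc : PresentedGroup (chshRels n)) ^ k * X ^ k = X ^ k * Jc ^ k :=
      (comJX.pow_pow k k).eq
    have key2 : (a m : PresentedGroup (chshRels n)) ^ 2 = Jc ^ k := by
      rw [key, mul_assoc, hcom, ← mul_assoc, inv_mul_cancel, one_mul]
    rw [key2, ← pow_add, hkm, jn]

theorem ainv (hn0 : 0 < n) (i : ℕ) :
    ((a i : PresentedGroup (chshRels n)))⁻¹ = Jc ^ i * a i := by
  have h := asq hn0 i
  have h2 : (a i : PresentedGroup (chshRels n)) * (a i * Jc ^ i) = 1 := by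
    rw [← mul_assoc, ← pow_two]; exact h
  rw [inv_eq_of_mul_eq_one_right h2, (comJa i).pow_left i |>.eq]

theorem conjx_a (i : ℕ) :
    X * (a i) * X⁻¹ = (a (i+1) : PresentedGroup (chshRels n)) * (a 1)⁻¹ := by
  show X * (X ^ i * (Y ^ i)⁻¹) * X⁻¹ =
    (X ^ (i+1) * (Y ^ (i+1))⁻¹) * ((X:PresentedGroup (chshRels n)) ^ 1 * (Y ^ 1)⁻¹)⁻¹
  group

theorem conjxinv_a (hn0 : 0 < n) (i : ℕ) :
    X⁻¹ * (a (i+1)) * X = (a i : PresentedGroup (chshRels n)) * (a (n-1))⁻¹ := by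
  have hX : (X : PresentedGroup (chshRels n)) ^ (n-1) = X⁻¹ := by
    apply eq_inv_of_mul_eq_one_left
    rw [← pow_succ, (by omega : n - 1 + 1 = n), xn]
  have hY : ((Y : PresentedGroup (chshRels n)) ^ (n-1))⁻¹ = Y := by
    have : (Y : PresentedGroup (chshRels n)) ^ (n-1) = Y⁻¹ := by
      apply eq_inv_of_mul_eq_one_left
      rw [← pow_succ, (by omega : n - 1 + 1 = n), yn]
    rw [this, inv_inv]
  have han : (a (n-1) : PresentedGroup (chshRels n)) = X⁻¹ * Y := by
    show (X : PresentedGroup (chshRels n)) ^ (n-1) * (Y ^ (n-1))⁻¹ = X⁻¹ * Y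
    rw [hX, hY]
  rw [han]
  show X⁻¹ * (X ^ (i+1) * (Y ^ (i+1))⁻¹) * X =
    ((X:PresentedGroup (chshRels n)) ^ i * (Y ^ i)⁻¹) * (X⁻¹ * Y)⁻¹
  group

theorem y_eq (hn0 : 0 < n) : (Y : PresentedGroup (chshRels n)) = X * a (n-1) := by
  have hX : (X : PresentedGroup (chshRels n)) ^ (n-1) = X⁻¹ := by
    apply eq_inv_of_mul_eq_one_left
    rw [← pow_succ, (by omega : n - 1 + 1 = n), xn]
  have hY : ((Y : PresentedGroup (chshRels n)) ^ (n-1))⁻¹ = Y := by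
    have : (Y : PresentedGroup (chshRels n)) ^ (n-1) = Y⁻¹ := by
      apply eq_inv_of_mul_eq_one_left
      rw [← pow_succ, (by omega : n - 1 + 1 = n), yn]
    rw [this, inv_inv]
  have han : (a (n-1) : PresentedGroup (chshRels n)) = X⁻¹ * Y := by
    show (X : PresentedGroup (chshRels n)) ^ (n-1) * (Y ^ (n-1))⁻¹ = X⁻¹ * Y
    rw [hX, hY]
  rw [han, ← mul_assoc, mul_inv_cancel, one_mul]

theorem comm1 (hn0 : 0 < n) (i : ℕ) :
    Commute (a 1 : PresentedGroup (chshRels n)) (a i) := by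
  cases i with
  | zero => rw [a0]; exact Commute.one_right _
  | succ i =>
    obtain ⟨u, hu⟩ : ∃ u : PresentedGroup (chshRels n), u = X * a i * X⁻¹ := ⟨_, rfl⟩
    have h1 : u * a 1 = a (i+1) := by
      rw [hu, conjx_a, inv_mul_cancel_right]
    have hu2 : u * u = X * ((a i) * (a i)) * X⁻¹ := by
      rw [hu]; exact gconj2 X (a i)
    have ha2 : (a i : PresentedGroup (chshRels n)) ^ 2 = (Jc ^ i)⁻¹ :=
      eq_inv_of_mul_eq_one_left (asq hn0 i)
    have ha12 : (a 1 : PresentedGroup (chshRels n)) * a 1 = Jc⁻¹ := by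
      have := eq_inv_of_mul_eq_one_left (asq hn0 1)
      rw [pow_two] at this; rw [this, pow_one]
    have hi2 : (a (i+1) : PresentedGroup (chshRels n)) ^ 2 = (Jc ^ (i+1))⁻¹ :=
      eq_inv_of_mul_eq_one_left (asq hn0 (i+1))
    have hcomm : Commute ((Jc:PresentedGroup (chshRels n)) ^ i)⁻¹ X :=
      ((comJX.pow_left i).inv_left)
    have hmain : u * a 1 * (u * a 1) = u * u * (a 1 * a 1) := by
      have l : u * a 1 * (u * a 1) = (Jc ^ (i+1) : PresentedGroup (chshRels n))⁻¹ := by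
        rw [h1, ← pow_two]; exact hi2
      have r : u * u * (a 1 * a 1) = (Jc ^ (i+1) : PresentedGroup (chshRels n))⁻¹ := by
        rw [hu2, ha12, ← pow_two, ha2, ← hcomm.eq, mul_inv_cancel_right, ← mul_inv_rev,
          ← pow_succ']
      rw [l, r]
    have hcanc : a 1 * u = u * a 1 := by
      obtain ⟨b, hb⟩ : ∃ b : PresentedGroup (chshRels n), b = a 1 := ⟨_, rfl⟩
      rw [← hb] at hmain ⊢
      rw [mul_assoc u b (u * b), mul_assoc u u (b * b)] at hmain
      have h2 := mul_left_cancel hmain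
      rw [← mul_assoc, ← mul_assoc] at h2
      exact mul_right_cancel h2
    have hc : Commute (a 1 : PresentedGroup (chshRels n)) u := hcanc
    have := hc.mul_right (Commute.refl (a 1 : PresentedGroup (chshRels n)))
    rwa [h1] at this

theorem comm_step (hn0 : 0 < n) {i j : ℕ}
    (h : Commute (a i : PresentedGroup (chshRels n)) (a j)) :
    Commute (a (i+1) : PresentedGroup (chshRels n)) (a (j+1)) := by
  have hconj : ((X * a i * X⁻¹ : PresentedGroup (chshRels n))) * (X * a j * X⁻¹) =
      (X * a j * X⁻¹) * (X * a i * X⁻¹) := by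
    obtain ⟨v, hv⟩ : ∃ v : PresentedGroup (chshRels n), v = a i := ⟨_, rfl⟩
    obtain ⟨w, hw⟩ : ∃ w : PresentedGroup (chshRels n), w = a j := ⟨_, rfl⟩
    rw [← hv, ← hw] at h ⊢
    have e1 : (X * v * X⁻¹) * (X * w * X⁻¹) = X * (v * w) * X⁻¹ := by group
    have e2 : (X * w * X⁻¹) * (X * v * X⁻¹) = X * (w * v) * X⁻¹ := by group
    rw [e1, e2, h.eq]
  rw [conjx_a, conjx_a] at hconj
  -- (a(i+1) * (a1)⁻¹) * (a(j+1) * (a1)⁻¹) = (a(j+1) * (a1)⁻¹) * (a(i+1) * (a1)⁻¹)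
  obtain ⟨p, hp⟩ : ∃ p : PresentedGroup (chshRels n), p = a (i+1) := ⟨_, rfl⟩
  obtain ⟨q, hq⟩ : ∃ q : PresentedGroup (chshRels n), q = a (j+1) := ⟨_, rfl⟩
  obtain ⟨b, hb⟩ : ∃ b : PresentedGroup (chshRels n), b = a 1 := ⟨_, rfl⟩
  have cbp : b⁻¹ * p = p * b⁻¹ := by
    rw [hp, hb]; exact ((comm1 hn0 (i+1)).inv_left).eq
  have cbq : b⁻¹ * q = q * b⁻¹ := by
    rw [hq, hb]; exact ((comm1 hn0 (j+1)).inv_left).eq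
  rw [← hp, ← hq, ← hb] at hconj
  -- p b⁻¹ q b⁻¹ = q b⁻¹ p b⁻¹
  have h2 : p * q * b⁻¹ * b⁻¹ = q * p * b⁻¹ * b⁻¹ := by
    calc p * q * b⁻¹ * b⁻¹ = p * (q * b⁻¹) * b⁻¹ := by rw [mul_assoc p q b⁻¹]
      _ = p * (b⁻¹ * q) * b⁻¹ := by rw [cbq]
      _ = p * b⁻¹ * (q * b⁻¹) := by rw [← mul_assoc, mul_assoc (p * b⁻¹) q b⁻¹]
      _ = q * b⁻¹ * (p * b⁻¹) := hconj
      _ = q * (b⁻¹ * p) * b⁻¹ := by rw [mul_assoc q b⁻¹ (p * b⁻¹), ← mul_assoc b⁻¹ p b⁻¹, ← mul_assoc]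
      _ = q * p * b⁻¹ * b⁻¹ := by rw [cbp, ← mul_assoc]
  have h3 := mul_right_cancel (mul_right_cancel h2)
  rw [← hp, ← hq]
  exact h3

theorem commAll (hn0 : 0 < n) (i j : ℕ) :
    Commute (a i : PresentedGroup (chshRels n)) (a j) := by
  have aux : ∀ d i : ℕ, Commute (a i : PresentedGroup (chshRels n)) (a (i + d)) := by
    intro d i
    induction i with
    | zero => rw [a0]; exact Commute.one_left _
    | succ i ih =>
      have := comm_step hn0 ih
      rwa [(by omega : i + d + 1 = i + 1 + d)] at this
  rcases le_total i j with h | h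
  · obtain ⟨d, rfl⟩ := Nat.le.dest h
    exact aux d i
  · obtain ⟨d, rfl⟩ := Nat.le.dest h
    exact (aux d j).symm

def Wup (m : ℕ) (q : ℕ → ℕ) : PresentedGroup (chshRels n) :=
  ((List.range m).map (fun k => (a (k+1)) ^ (q (k+1)))).prod

theorem Wup_zero (q : ℕ → ℕ) : (Wup 0 q : PresentedGroup (chshRels n)) = 1 := rfl

theorem Wup_succ (m : ℕ) (q : ℕ → ℕ) :
    (Wup (m+1) q : PresentedGroup (chshRels n)) = Wup m q * (a (m+1)) ^ (q (m+1)) := by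
  unfold Wup
  rw [List.range_succ, List.map_append, List.prod_append]
  simp

theorem com_a_Wup (hn0 : 0 < n) (j m : ℕ) (q : ℕ → ℕ) :
    Commute (a j : PresentedGroup (chshRels n)) (Wup m q) := by
  induction m with
  | zero => rw [Wup_zero]; exact Commute.one_right _
  | succ m ih =>
    rw [Wup_succ]
    exact ih.mul_right ((commAll hn0 j (m+1)).pow_right _)

theorem comJ_Wup (m : ℕ) (q : ℕ → ℕ) :
    Commute (Jc : PresentedGroup (chshRels n)) (Wup m q) := by
  induction m with
  | zero => rw [Wup_zero]; exact Commute.one_right _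
  | succ m ih =>
    rw [Wup_succ]
    exact ih.mul_right ((comJa (m+1)).pow_right _)

theorem Wup_congr (m : ℕ) (q q' : ℕ → ℕ) (h : ∀ k, k ≤ m → q k = q' k) :
    (Wup m q : PresentedGroup (chshRels n)) = Wup m q' := by
  induction m with
  | zero => rw [Wup_zero, Wup_zero]
  | succ m ih =>
    rw [Wup_succ, Wup_succ, ih (fun k hk => h k (by omega)), h (m+1) le_rfl]

theorem insert_a (hn0 : 0 < n) : ∀ m (q : ℕ → ℕ) j, (∀ k, q k ≤ 1) → 1 ≤ j → j ≤ m → j ≤ n →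
    ∃ (e : ℕ) (q' : ℕ → ℕ), (∀ k, q' k ≤ 1) ∧ (∀ k, m < k → q' k = q k) ∧
      (a j : PresentedGroup (chshRels n)) * Wup m q = Jc ^ e * Wup m q' := by
  intro m
  induction m with
  | zero => intro q j hq h1 h0 _; omega
  | succ m ih =>
    intro q j hq h1 hjm hjn
    rcases Nat.lt_or_ge j (m+1) with hlt | hge
    · obtain ⟨e, q', hq', hagree, heq⟩ := ih q j hq h1 (by omega) hjn
      refine ⟨e, q', hq', fun k hk => hagree k (by omega), ?_⟩
      rw [Wup_succ, ← mul_assoc, heq, Wup_succ, mul_assoc, hagree (m+1) (by omega)]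
    · have hj : j = m + 1 := by omega
      subst hj
      have hcom := (com_a_Wup hn0 (m+1) m q).eq
      rcases Nat.le_one_iff_eq_zero_or_eq_one.mp (hq (m+1)) with h0 | hone
      · refine ⟨0, fun k => if k = m+1 then 1 else q k, ?_, ?_, ?_⟩
        · intro k; by_cases hk : k = m+1 <;> simp [hk, hq k]
        · intro k hk
          show (if _ then _ else _) = _
          rw [if_neg (by omega : ¬ k = m + 1)]
        · have hW : (Wup m (fun k => if k = m+1 then 1 else q k) : PresentedGroup (chshRels n))
              = Wup m q := Wup_congr m _ _ (fun k hk => by rw [if_neg (by omega)])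
          rw [pow_zero, one_mul, Wup_succ, Wup_succ, hW, h0, pow_zero, mul_one,
            if_pos rfl, pow_one, ← mul_assoc, hcom]
          exact (mul_assoc _ _ _).symm
      · refine ⟨n - (m+1), fun k => if k = m+1 then 0 else q k, ?_, ?_, ?_⟩
        · intro k; by_cases hk : k = m+1 <;> simp [hk, hq k]
        · intro k hk
          show (if _ then _ else _) = _
          rw [if_neg (by omega : ¬ k = m + 1)]
        · have hW : (Wup m (fun k => if k = m+1 then 0 else q k) : PresentedGroup (chshRels n))
              = Wup m q := Wup_congr m _ _ (fun k hk => by rw [if_neg (by omega)])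
          have hJe : (Jc : PresentedGroup (chshRels n)) ^ (n - (m+1)) = (Jc ^ (m+1))⁻¹ := by
            apply eq_inv_of_mul_eq_one_left
            rw [← pow_add, (by omega : n - (m+1) + (m+1) = n), jn]
          have haa : (a (m+1) : PresentedGroup (chshRels n)) * a (m+1) = (Jc ^ (m+1))⁻¹ := by
            rw [← pow_two]
            exact eq_inv_of_mul_eq_one_left (asq hn0 (m+1))
          rw [Wup_succ, Wup_succ, hW, hone, pow_one, if_pos rfl, pow_zero, mul_one,
            ← mul_assoc, hcom, mul_assoc, haa, hJe]
          exact ((comJ_Wup m q).pow_left (m+1)).inv_left.eq.symm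

def Tform (t : PresentedGroup (chshRels n)) : Prop :=
  ∃ (e : ℕ) (q : ℕ → ℕ), (∀ k, q k ≤ 1) ∧ t = Jc ^ e * Wup (n-1) q

theorem T1 : Tform (1 : PresentedGroup (chshRels n)) := by
  refine ⟨0, fun _ => 0, fun _ => Nat.zero_le 1, ?_⟩
  rw [pow_zero, one_mul]
  induction (n-1) with
  | zero => rw [Wup_zero]
  | succ m ih => rw [Wup_succ, pow_zero, mul_one, ← ih]

theorem TmulJpow {t : PresentedGroup (chshRels n)} (s : ℕ) (h : Tform t) :
    Tform ((Jc : PresentedGroup (chshRels n)) ^ s * t) := by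
  obtain ⟨e, q, hq, rfl⟩ := h
  exact ⟨s + e, q, hq, by rw [pow_add, mul_assoc]⟩

theorem TmulJ {t : PresentedGroup (chshRels n)} (h : Tform t) :
    Tform ((Jc : PresentedGroup (chshRels n)) * t) := by
  have := TmulJpow 1 h; rwa [pow_one] at this

theorem Tmul_a (hn0 : 0 < n) {t : PresentedGroup (chshRels n)} (m : ℕ) (h : Tform t) :
    Tform ((a m : PresentedGroup (chshRels n)) * t) := by
  obtain ⟨e, q, hq, rfl⟩ := h
  rw [a_red]
  rcases Nat.eq_zero_or_pos (m % n) with h0 | h1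
  · rw [h0, a0, one_mul]; exact ⟨e, q, hq, rfl⟩
  · have hmn : m % n < n := Nat.mod_lt _ hn0
    obtain ⟨e', q', hq', _, heq⟩ :=
      insert_a hn0 (n-1) q (m % n) hq h1 (by omega) (by omega)
    have hcomJ : (a (m % n) : PresentedGroup (chshRels n)) * Jc ^ e = Jc ^ e * a (m % n) :=
      ((comJa (m % n)).symm.pow_right e).eq
    refine ⟨e + e', q', hq', ?_⟩
    rw [← mul_assoc, hcomJ, mul_assoc, heq, pow_add, ← mul_assoc, mul_assoc]

theorem Tmul_ainv (hn0 : 0 < n) {t : PresentedGroup (chshRels n)} (m : ℕ) (h : Tform t) :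
    Tform ((a m : PresentedGroup (chshRels n))⁻¹ * t) := by
  rw [ainv hn0, mul_assoc]
  exact TmulJpow m (Tmul_a hn0 m h)

theorem TmulW (hn0 : 0 < n) : ∀ (m : ℕ) (q : ℕ → ℕ) (t : PresentedGroup (chshRels n)),
    (∀ k, q k ≤ 1) → Tform t → Tform ((Wup m q : PresentedGroup (chshRels n)) * t) := by
  intro m
  induction m with
  | zero => intro q t hq h; rwa [Wup_zero, one_mul]
  | succ m ih =>
    intro q t hq h
    rw [Wup_succ, mul_assoc]
    rcases Nat.le_one_iff_eq_zero_or_eq_one.mp (hq (m+1)) with h0 | hone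
    · rw [h0, pow_zero, one_mul]; exact ih q t hq h
    · rw [hone, pow_one]; exact ih q _ hq (Tmul_a hn0 (m+1) h)

theorem Tmul (hn0 : 0 < n) {t1 t2 : PresentedGroup (chshRels n)} (h1 : Tform t1)
    (h2 : Tform t2) : Tform (t1 * t2) := by
  obtain ⟨e, q, hq, rfl⟩ := h1
  rw [mul_assoc]
  exact TmulJpow e (TmulW hn0 (n-1) q t2 hq h2)

theorem Winv (hn0 : 0 < n) : ∀ (m : ℕ) (q : ℕ → ℕ), (∀ k, q k ≤ 1) →
    Tform ((Wup m q : PresentedGroup (chshRels n))⁻¹) := by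
  intro m
  induction m with
  | zero => intro q hq; rw [Wup_zero, inv_one]; exact T1
  | succ m ih =>
    intro q hq
    rw [Wup_succ, mul_inv_rev]
    rcases Nat.le_one_iff_eq_zero_or_eq_one.mp (hq (m+1)) with h0 | hone
    · rw [h0, pow_zero, inv_one, one_mul]; exact ih q hq
    · rw [hone, pow_one]; exact Tmul_ainv hn0 (m+1) (ih q hq)

theorem Tinv (hn0 : 0 < n) {t : PresentedGroup (chshRels n)} (h : Tform t) : Tform t⁻¹ := by
  obtain ⟨e, q, hq, rfl⟩ := h
  rw [mul_inv_rev]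
  have hJe : ((Jc : PresentedGroup (chshRels n)) ^ e)⁻¹ = Jc ^ (e * (n-1)) := by
    refine (eq_inv_of_mul_eq_one_left ?_).symm
    rw [← pow_add,
      (by cases n with | zero => omega | succ m => simp only [Nat.add_sub_cancel]; ring
        : e * (n-1) + e = n * e), pow_mul, jn, one_pow]
  rw [hJe, ((comJ_Wup (n-1) q).pow_left (e * (n-1))).inv_right.eq.symm]
  exact TmulJpow (e * (n-1)) (Winv hn0 (n-1) q hq)

theorem gsplit {G : Type*} [Group G] (v u w : G) :
    v * (u * w) * v⁻¹ = (v * u * v⁻¹) * (v * w * v⁻¹) := by group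

theorem WconjP (hn0 : 0 < n) : ∀ (m : ℕ) (q : ℕ → ℕ), (∀ k, q k ≤ 1) →
    Tform ((X : PresentedGroup (chshRels n)) * Wup m q * X⁻¹) := by
  intro m
  induction m with
  | zero => intro q hq; rw [Wup_zero, mul_one, mul_inv_cancel]; exact T1
  | succ m ih =>
    intro q hq
    rw [Wup_succ, gsplit]
    refine Tmul hn0 (ih q hq) ?_
    rcases Nat.le_one_iff_eq_zero_or_eq_one.mp (hq (m+1)) with h0 | hone
    · rw [h0, pow_zero, mul_one, mul_inv_cancel]; exact T1
    · rw [hone, pow_one, conjx_a]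
      have := Tmul_a hn0 (m+2) (Tmul_ainv hn0 1 T1)
      rwa [mul_one] at this
theorem WconjN (hn0 : 0 < n) : ∀ (m : ℕ) (q : ℕ → ℕ), (∀ k, q k ≤ 1) →
    Tform ((X : PresentedGroup (chshRels n))⁻¹ * Wup m q * X) := by
  intro m
  induction m with
  | zero => intro q hq; rw [Wup_zero, mul_one, inv_mul_cancel]; exact T1
  | succ m ih =>
    intro q hq
    have h2 : (X : PresentedGroup (chshRels n))⁻¹ * Wup (m+1) q * X =
        (X⁻¹ * Wup m q * X) * (X⁻¹ * (a (m+1)) ^ (q (m+1)) * X) := by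
      rw [Wup_succ]
      have := gsplit (X : PresentedGroup (chshRels n))⁻¹ (Wup m q) ((a (m+1)) ^ (q (m+1)))
      rwa [inv_inv] at this
    rw [h2]
    refine Tmul hn0 (ih q hq) ?_
    rcases Nat.le_one_iff_eq_zero_or_eq_one.mp (hq (m+1)) with h0 | hone
    · rw [h0, pow_zero, mul_one, inv_mul_cancel]; exact T1
    · rw [hone, pow_one, conjxinv_a hn0]
      have := Tmul_a hn0 m (Tmul_ainv hn0 (n-1) T1)
      rwa [mul_one] at this

theorem TconjP (hn0 : 0 < n) {t : PresentedGroup (chshRels n)} (h : Tform t) :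
    Tform ((X : PresentedGroup (chshRels n)) * t * X⁻¹) := by
  obtain ⟨e, q, hq, rfl⟩ := h
  rw [← mul_assoc, (comJX.symm.pow_right e).eq, mul_assoc (Jc ^ e) X (Wup (n-1) q), mul_assoc]
  exact TmulJpow e (WconjP hn0 (n-1) q hq)

theorem TconjN (hn0 : 0 < n) {t : PresentedGroup (chshRels n)} (h : Tform t) :
    Tform ((X : PresentedGroup (chshRels n))⁻¹ * t * X) := by
  obtain ⟨e, q, hq, rfl⟩ := h
  rw [← mul_assoc, ((comJX.symm.pow_right e).inv_left).eq, mul_assoc (Jc ^ e) X⁻¹ (Wup (n-1) q),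
    mul_assoc]
  exact TmulJpow e (WconjN hn0 (n-1) q hq)

theorem TconjPowN (hn0 : 0 < n) : ∀ (s : ℕ) {t : PresentedGroup (chshRels n)}, Tform t →
    Tform (((X : PresentedGroup (chshRels n)) ^ s)⁻¹ * t * X ^ s) := by
  intro s
  induction s with
  | zero => intro t h; rwa [pow_zero, inv_one, one_mul, mul_one]
  | succ s ih =>
    intro t h
    have hid : ((X : PresentedGroup (chshRels n)) ^ (s+1))⁻¹ * t * X ^ (s+1) =
        X⁻¹ * ((X ^ s)⁻¹ * t * X ^ s) * X := by group
    rw [hid]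
    exact TconjN hn0 (ih h)

def GoodS (hn0 : 0 < n) : Subgroup (PresentedGroup (chshRels n)) where
  carrier := {g | ∃ (j : ℕ) (t : PresentedGroup (chshRels n)), Tform t ∧ g = X ^ j * t}
  one_mem' := ⟨0, 1, T1, by rw [pow_zero, one_mul]⟩
  mul_mem' := by
    rintro g1 g2 ⟨j1, t1, h1, rfl⟩ ⟨j2, t2, h2, rfl⟩
    refine ⟨j1 + j2, ((X ^ j2)⁻¹ * t1 * X ^ j2) * t2, Tmul hn0 (TconjPowN hn0 j2 h1) h2, ?_⟩
    rw [pow_add]; group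
  inv_mem' := by
    rintro g ⟨j, t, h, rfl⟩
    have hXj : ((X : PresentedGroup (chshRels n)) ^ j)⁻¹ = X ^ (j * (n-1)) := by
      refine (eq_inv_of_mul_eq_one_left ?_).symm
      rw [← pow_add,
        (by cases n with | zero => omega | succ m => simp only [Nat.add_sub_cancel]; ring
          : j * (n-1) + j = n * j), pow_mul, xn, one_pow]
    refine ⟨j * (n-1), (X ^ (j * (n-1)))⁻¹ * t⁻¹ * X ^ (j * (n-1)),
      TconjPowN hn0 (j * (n-1)) (Tinv hn0 h), ?_⟩
    rw [mul_inv_rev, hXj]; group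

theorem allGood (hn0 : 0 < n) (g : PresentedGroup (chshRels n)) : g ∈ GoodS hn0 := by
  refine PresentedGroup.generated_by _ _ ?_ g
  intro j
  fin_cases j
  · refine ⟨1, 1, T1, ?_⟩
    show (X : PresentedGroup (chshRels n)) = X ^ 1 * 1
    rw [pow_one, mul_one]
  · refine ⟨1, a (n-1) * 1, Tmul_a hn0 (n-1) T1, ?_⟩
    show (Y : PresentedGroup (chshRels n)) = X ^ 1 * (a (n-1) * 1)
    rw [pow_one, mul_one, y_eq hn0]
  · refine ⟨0, Jc * 1, TmulJ T1, ?_⟩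
    show (Jc : PresentedGroup (chshRels n)) = X ^ 0 * (Jc * 1)
    rw [pow_zero, one_mul, mul_one]

end Aux

theorem stmt_6 (n : ℕ) (hn : 2 ≤ n) (g : Gn n) :
    ∃ (i j : ℕ) (q : ℕ → ℕ), i < n ∧ j < n ∧ (∀ k, q k ≤ 1) ∧
      g = (PresentedGroup.of (rels := chshRels n) 2 : Gn n) ^ i *
          (PresentedGroup.of (rels := chshRels n) 0 : Gn n) ^ j *
          ((List.range (n - 1)).map (fun k =>
            ((PresentedGroup.of (rels := chshRels n) 0 : Gn n) ^ (k + 1) *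
             ((PresentedGroup.of (rels := chshRels n) 1 : Gn n) ^ (k + 1))⁻¹) ^ (q (k + 1)))).prod := by
  have hn0 : 0 < n := by omega
  obtain ⟨j, t, ⟨e, q, hq, rfl⟩, hg⟩ := Aux.allGood (n := n) hn0 g
  refine ⟨e % n, j % n, q, Nat.mod_lt _ hn0, Nat.mod_lt _ hn0, hq, ?_⟩
  have hfinal : g = (Aux.Jc : PresentedGroup (chshRels n)) ^ (e % n) * Aux.X ^ (j % n) *
      Aux.Wup (n-1) q := by
    rw [hg, ← Aux.powj_red, ← Aux.powx_red, ← mul_assoc, (Aux.comJX.symm.pow_pow j e).eq]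
    rfl
  exact hfinal
end

section
/- For any unitary operators A₀, A₁, B₀, B₁ on a Hilbert space with A₀² = A₁² = B₀² = B₁² = I and [Aᵢ, Bⱼ] = 0 for all i,j, the identity 2√2·I − (A₀B₀ + A₀B₁ + A₁B₀ − A₁B₁) = (√2/4)(A₀ + A₁ − √2·B₀)² + (√2/4)(A₀ − A₁ − √2·B₁)² holds. -/
/-!
Expanding the squares, each involution squares to `1`, the terms `A₀A₁ + A₁A₀` of the two
squares cancel, and commutation of Alice's with Bob's operators collects the cross terms into
`2√2` times the CHSH operator; the sum of the two squares is thus `8 - 2√2 · CHSH`, and scaling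
by `√2/4` gives the identity.
-/

section

variable {𝕜 R : Type*} [Field 𝕜] [Ring R] [Algebra 𝕜 R]

theorem Commute.sub_smul_sq_of_mul_self_eq_one {x b : R} (h : Commute x b) (hb : b * b = 1)
    (s : 𝕜) : (x - s • b) ^ 2 = x ^ 2 - (2 * s) • (x * b) + (s * s) • 1 := by
  rw [(h.smul_right s).sub_sq, smul_pow, sq b, hb, mul_assoc, mul_smul_comm, two_mul]
  module

theorem add_sq_add_sub_sq_of_mul_self_eq_one {a₀ a₁ : R} (h₀ : a₀ * a₀ = 1) (h₁ : a₁ * a₁ = 1) :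
    (a₀ + a₁) ^ 2 + (a₀ - a₁) ^ 2 = 4 := by
  simp only [sq, add_mul, mul_add, sub_mul, mul_sub, h₀, h₁]
  abel_nf
  norm_num

variable [CharZero 𝕜]

theorem chsh_eq_sum_of_squares {s : 𝕜} (hs : s * s = 2) {a₀ a₁ b₀ b₁ : R}
    (ha₀ : a₀ * a₀ = 1) (ha₁ : a₁ * a₁ = 1) (hb₀ : b₀ * b₀ = 1) (hb₁ : b₁ * b₁ = 1)
    (h₀₀ : Commute a₀ b₀) (h₀₁ : Commute a₀ b₁) (h₁₀ : Commute a₁ b₀) (h₁₁ : Commute a₁ b₁) :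
    (2 * s) • 1 - (a₀ * b₀ + a₀ * b₁ + a₁ * b₀ - a₁ * b₁) =
      (s / 4) • (a₀ + a₁ - s • b₀) ^ 2 + (s / 4) • (a₀ - a₁ - s • b₁) ^ 2 := by
  set chsh := a₀ * b₀ + a₀ * b₁ + a₁ * b₀ - a₁ * b₁
  have hsum : (a₀ + a₁ - s • b₀) ^ 2 + (a₀ - a₁ - s • b₁) ^ 2 = (8 : 𝕜) • 1 - (2 * s) • chsh :=
    calc _ = ((a₀ + a₁) ^ 2 + (a₀ - a₁) ^ 2) + (2 * s * s) • 1 - (2 * s) • chsh := by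
          rw [(h₀₀.add_left h₁₀).sub_smul_sq_of_mul_self_eq_one hb₀,
            (h₀₁.sub_left h₁₁).sub_smul_sq_of_mul_self_eq_one hb₁]
          simp only [chsh, add_mul, sub_mul]
          module
      _ = _ := by
        rw [add_sq_add_sub_sq_of_mul_self_eq_one ha₀ ha₁, mul_assoc, hs,
          ← mul_one (4 : R), ← map_ofNat (algebraMap 𝕜 R), ← Algebra.smul_def]
        module
  have h8 : s / 4 * 8 = 2 * s := by ring
  have h2s : s / 4 * (2 * s) = 1 := by linear_combination hs / 2
  rw [← smul_add, hsum, smul_sub, smul_smul, smul_smul, h8, h2s, one_smul]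

end

theorem stmt_10_general {H : Type*} [NormedAddCommGroup H] [InnerProductSpace ℂ H]
    (A₀ A₁ B₀ B₁ : H →L[ℂ] H)
    (hA₀ : A₀ * A₀ = 1) (hA₁ : A₁ * A₁ = 1) (hB₀ : B₀ * B₀ = 1) (hB₁ : B₁ * B₁ = 1)
    (h₀₀ : Commute A₀ B₀) (h₀₁ : Commute A₀ B₁) (h₁₀ : Commute A₁ B₀) (h₁₁ : Commute A₁ B₁) :
    ((2 * Real.sqrt 2 : ℝ) : ℂ) • (1 : H →L[ℂ] H) -
        (A₀ * B₀ + A₀ * B₁ + A₁ * B₀ - A₁ * B₁) =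
      ((Real.sqrt 2 / 4 : ℝ) : ℂ) • (A₀ + A₁ - ((Real.sqrt 2 : ℝ) : ℂ) • B₀) ^ 2 +
        ((Real.sqrt 2 / 4 : ℝ) : ℂ) • (A₀ - A₁ - ((Real.sqrt 2 : ℝ) : ℂ) • B₁) ^ 2 := by
  have hs : ((Real.sqrt 2 : ℝ) : ℂ) * ((Real.sqrt 2 : ℝ) : ℂ) = 2 := by
    rw [← Complex.ofReal_mul, Real.mul_self_sqrt zero_le_two, Complex.ofReal_ofNat]
  push_cast
  exact chsh_eq_sum_of_squares hs hA₀ hA₁ hB₀ hB₁ h₀₀ h₀₁ h₁₀ h₁₁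

theorem stmt_10 {H : Type*} [NormedAddCommGroup H] [InnerProductSpace ℂ H]
    [FiniteDimensional ℂ H] [CompleteSpace H]
    (A₀ A₁ B₀ B₁ : H →L[ℂ] H)
    (hA₀u : A₀ ∈ unitary (H →L[ℂ] H)) (hA₁u : A₁ ∈ unitary (H →L[ℂ] H))
    (hB₀u : B₀ ∈ unitary (H →L[ℂ] H)) (hB₁u : B₁ ∈ unitary (H →L[ℂ] H))
    (hA₀ : A₀ * A₀ = 1) (hA₁ : A₁ * A₁ = 1) (hB₀ : B₀ * B₀ = 1) (hB₁ : B₁ * B₁ = 1)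
    (h₀₀ : Commute A₀ B₀) (h₀₁ : Commute A₀ B₁) (h₁₀ : Commute A₁ B₀) (h₁₁ : Commute A₁ B₁) :
    ((2 * Real.sqrt 2 : ℝ) : ℂ) • (1 : H →L[ℂ] H) -
        (A₀ * B₀ + A₀ * B₁ + A₁ * B₀ - A₁ * B₁) =
      ((Real.sqrt 2 / 4 : ℝ) : ℂ) • (A₀ + A₁ - ((Real.sqrt 2 : ℝ) : ℂ) • B₀) ^ 2 +
        ((Real.sqrt 2 / 4 : ℝ) : ℂ) • (A₀ - A₁ - ((Real.sqrt 2 : ℝ) : ℂ) • B₁) ^ 2 :=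
  stmt_10_general A₀ A₁ B₀ B₁ hA₀ hA₁ hB₀ hB₁ h₀₀ h₀₁ h₁₀ h₁₁
end

section
/- Let A₀, A₁, B₀, B₁ be self-adjoint unitaries on a finite-dimensional Hilbert space with [Aᵢ,Bⱼ] = 0, and let |ψ⟩ be a unit vector with ⟨ψ|(A₀B₀ + A₀B₁ + A₁B₀ − A₁B₁)|ψ⟩ = 2√2. Then (A₀A₁ + A₁A₀)|ψ⟩ = 0 and (B₀B₁ + B₁B₀)|ψ⟩ = 0. -/
/-! With `c = √2`, the sum-of-squares identity
`(A₀ + A₁ - c B₀)² + (A₀ - A₁ - c B₁)² = 8 - 2c 𝓑` for the CHSH operator `𝓑` shows that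
saturating `⟨ψ, 𝓑 ψ⟩ = 2√2` forces `(A₀ + A₁) ψ = c B₀ ψ`. Since `B₀` commutes with `A₀ + A₁`,
squaring gives `(A₀ + A₁)² ψ = c² B₀² ψ = 2 ψ`, i.e. `(A₀ A₁ + A₁ A₀) ψ = 0`. The CHSH operator is
symmetric under exchanging the two parties, which yields the statement for the `Bⱼ`. -/

open scoped InnerProductSpace

def chsh {R : Type*} [Ring R] (A₀ A₁ B₀ B₁ : R) : R :=
  A₀ * B₀ + A₀ * B₁ + A₁ * B₀ - A₁ * B₁

section Algebra

variable {R : Type*} [Ring R] {A₀ A₁ B₀ B₁ : R}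

theorem chsh_swap (h₀₀ : Commute A₀ B₀) (h₀₁ : Commute A₀ B₁) (h₁₀ : Commute A₁ B₀)
    (h₁₁ : Commute A₁ B₁) : chsh B₀ B₁ A₀ A₁ = chsh A₀ A₁ B₀ B₁ := by
  rw [chsh, chsh, ← h₀₀.eq, ← h₁₀.eq, ← h₀₁.eq, ← h₁₁.eq]
  abel

theorem chsh_sos {𝕜 : Type*} [CommRing 𝕜] [Algebra 𝕜 R] {c : 𝕜} (hc : c * c = 2)
    (hA₀ : A₀ * A₀ = 1) (hA₁ : A₁ * A₁ = 1) (hB₀ : B₀ * B₀ = 1) (hB₁ : B₁ * B₁ = 1)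
    (h₀₀ : Commute A₀ B₀) (h₀₁ : Commute A₀ B₁) (h₁₀ : Commute A₁ B₀) (h₁₁ : Commute A₁ B₁) :
    (A₀ + A₁ - c • B₀) * (A₀ + A₁ - c • B₀) + (A₀ - A₁ - c • B₁) * (A₀ - A₁ - c • B₁) =
      (8 : 𝕜) • 1 - (2 * c) • chsh A₀ A₁ B₀ B₁ := by
  simp only [chsh, add_mul, sub_mul, mul_add, mul_sub, smul_mul_assoc, mul_smul_comm,
    smul_add, smul_sub, smul_smul, hc, hA₀, hA₁, hB₀, hB₁, ← h₀₀.eq, ← h₀₁.eq, ← h₁₀.eq, ← h₁₁.eq]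
  match_scalars <;> ring

theorem Commute.mul_self_smul_eq_of_smul_eq {M : Type*} [MulAction R M] {X Y : R} {ψ : M}
    (hXY : Commute X Y) (h : X • ψ = Y • ψ) : (X * X) • ψ = (Y * Y) • ψ := by
  rw [mul_smul, h, ← mul_smul, hXY.eq, mul_smul, h, mul_smul]

theorem anticommutator_smul_eq_zero {M : Type*} [AddCommGroup M] [Module R M] {Y : R} {ψ : M}
    (hA₀ : A₀ * A₀ = 1) (hA₁ : A₁ * A₁ = 1) (hY : Y * Y = 2) (hcomm : Commute (A₀ + A₁) Y)
    (h : (A₀ + A₁) • ψ = Y • ψ) : (A₀ * A₁ + A₁ * A₀) • ψ = 0 := by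
  have hsq : (A₀ + A₁) * (A₀ + A₁) = 2 + (A₀ * A₁ + A₁ * A₀) := by
    rw [add_mul, mul_add, mul_add, hA₀, hA₁, ← one_add_one_eq_two]
    abel
  have := hcomm.mul_self_smul_eq_of_smul_eq h
  rwa [hsq, hY, add_smul, add_eq_left] at this

end Algebra

section InnerProductSpace

variable {𝕜 E : Type*} [RCLike 𝕜] [NormedAddCommGroup E] [InnerProductSpace 𝕜 E] [CompleteSpace E]

theorem IsSelfAdjoint.inner_mul_self_apply {T : E →L[𝕜] E} (hT : IsSelfAdjoint T) (x : E) :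
    ⟪x, (T * T) x⟫_𝕜 = (‖T x‖ ^ 2 : ℝ) := by
  calc ⟪x, T (T x)⟫_𝕜 = ⟪T x, T x⟫_𝕜 := by
        rw [← ContinuousLinearMap.adjoint_inner_right, hT.adjoint_eq]
    _ = (‖T x‖ ^ 2 : ℝ) := by rw [inner_self_eq_norm_sq_to_K]; norm_cast

theorem IsSelfAdjoint.apply_eq_zero_of_inner_add_mul_self_eq_zero {P Q : E →L[𝕜] E}
    (hP : IsSelfAdjoint P) (hQ : IsSelfAdjoint Q) {x : E} (h : ⟪x, (P * P + Q * Q) x⟫_𝕜 = 0) :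
    P x = 0 ∧ Q x = 0 := by
  rw [add_apply, inner_add_right, hP.inner_mul_self_apply, hQ.inner_mul_self_apply] at h
  have h' : ‖P x‖ ^ 2 + ‖Q x‖ ^ 2 = 0 := by exact_mod_cast h
  rw [add_eq_zero_iff_of_nonneg (by positivity) (by positivity)] at h'
  simpa using h'

variable {A₀ A₁ B₀ B₁ : E →L[𝕜] E}

theorem anticommutator_apply_eq_zero_of_inner_chsh_eq_two_sqrt_two
    (hA₀s : IsSelfAdjoint A₀) (hA₁s : IsSelfAdjoint A₁)
    (hB₀s : IsSelfAdjoint B₀) (hB₁s : IsSelfAdjoint B₁)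
    (hA₀ : A₀ * A₀ = 1) (hA₁ : A₁ * A₁ = 1) (hB₀ : B₀ * B₀ = 1) (hB₁ : B₁ * B₁ = 1)
    (h₀₀ : Commute A₀ B₀) (h₀₁ : Commute A₀ B₁) (h₁₀ : Commute A₁ B₀) (h₁₁ : Commute A₁ B₁)
    {ψ : E} (hψ : ‖ψ‖ = 1) (hopt : ⟪ψ, chsh A₀ A₁ B₀ B₁ ψ⟫_𝕜 = (2 * √2 : ℝ)) :
    (A₀ * A₁ + A₁ * A₀) ψ = 0 := by
  set c : 𝕜 := ((√2 : ℝ) : 𝕜)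
  have hc : c * c = 2 := by
    rw [← RCLike.ofReal_mul, Real.mul_self_sqrt zero_le_two, RCLike.ofReal_ofNat]
  have hcs : IsSelfAdjoint c := RCLike.conj_ofReal _
  have hsos := chsh_sos hc hA₀ hA₁ hB₀ hB₁ h₀₀ h₀₁ h₁₀ h₁₁
  have hrhs : ⟪ψ, ((8 : 𝕜) • 1 - (2 * c) • chsh A₀ A₁ B₀ B₁) ψ⟫_𝕜 = 0 := by
    rw [sub_apply, inner_sub_right, smul_apply, smul_apply, inner_smul_right, inner_smul_right,
      one_apply_eq_self, inner_self_eq_norm_sq_to_K, hψ, hopt]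
    push_cast
    linear_combination (-4 : 𝕜) * hc
  obtain ⟨hP, -⟩ := IsSelfAdjoint.apply_eq_zero_of_inner_add_mul_self_eq_zero
    ((hA₀s.add hA₁s).sub (hcs.smul hB₀s)) ((hA₀s.sub hA₁s).sub (hcs.smul hB₁s)) (hsos ▸ hrhs)
  refine anticommutator_smul_eq_zero (Y := c • B₀) hA₀ hA₁ ?_ ((h₀₀.add_left h₁₀).smul_right c)
    (sub_eq_zero.mp hP)
  rw [smul_mul_smul_comm, hc, hB₀, two_smul, one_add_one_eq_two]

end InnerProductSpace

theorem stmt_11_general {H : Type*} [NormedAddCommGroup H] [InnerProductSpace ℂ H]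
    [CompleteSpace H]
    (A₀ A₁ B₀ B₁ : H →L[ℂ] H)
    (hA₀s : IsSelfAdjoint A₀) (hA₁s : IsSelfAdjoint A₁)
    (hB₀s : IsSelfAdjoint B₀) (hB₁s : IsSelfAdjoint B₁)
    (hA₀ : A₀ * A₀ = 1) (hA₁ : A₁ * A₁ = 1) (hB₀ : B₀ * B₀ = 1) (hB₁ : B₁ * B₁ = 1)
    (h₀₀ : Commute A₀ B₀) (h₀₁ : Commute A₀ B₁) (h₁₀ : Commute A₁ B₀) (h₁₁ : Commute A₁ B₁)
    (ψ : H) (hψ : ‖ψ‖ = 1)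
    (hopt : ⟪ψ, ((A₀ * B₀ + A₀ * B₁ + A₁ * B₀ - A₁ * B₁) ψ)⟫_ℂ = (2 * Real.sqrt 2 : ℝ)) :
    (A₀ * A₁ + A₁ * A₀) ψ = 0 ∧ (B₀ * B₁ + B₁ * B₀) ψ = 0 := by
  have hopt' : ⟪ψ, chsh B₀ B₁ A₀ A₁ ψ⟫_ℂ = (2 * √2 : ℝ) := by
    rw [chsh_swap h₀₀ h₀₁ h₁₀ h₁₁]
    exact hopt
  exact ⟨anticommutator_apply_eq_zero_of_inner_chsh_eq_two_sqrt_two hA₀s hA₁s hB₀s hB₁s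
      hA₀ hA₁ hB₀ hB₁ h₀₀ h₀₁ h₁₀ h₁₁ hψ hopt,
    anticommutator_apply_eq_zero_of_inner_chsh_eq_two_sqrt_two hB₀s hB₁s hA₀s hA₁s
      hB₀ hB₁ hA₀ hA₁ h₀₀.symm h₁₀.symm h₀₁.symm h₁₁.symm hψ hopt'⟩

theorem stmt_11 {H : Type*} [NormedAddCommGroup H] [InnerProductSpace ℂ H]
    [FiniteDimensional ℂ H] [CompleteSpace H]
    (A₀ A₁ B₀ B₁ : H →L[ℂ] H)
    (hA₀s : IsSelfAdjoint A₀) (hA₁s : IsSelfAdjoint A₁)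
    (hB₀s : IsSelfAdjoint B₀) (hB₁s : IsSelfAdjoint B₁)
    (hA₀ : A₀ * A₀ = 1) (hA₁ : A₁ * A₁ = 1) (hB₀ : B₀ * B₀ = 1) (hB₁ : B₁ * B₁ = 1)
    (h₀₀ : Commute A₀ B₀) (h₀₁ : Commute A₀ B₁) (h₁₀ : Commute A₁ B₀) (h₁₁ : Commute A₁ B₁)
    (ψ : H) (hψ : ‖ψ‖ = 1)
    (hopt : ⟪ψ, ((A₀ * B₀ + A₀ * B₁ + A₁ * B₀ - A₁ * B₁) ψ)⟫_ℂ = (2 * Real.sqrt 2 : ℝ)) :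
    (A₀ * A₁ + A₁ * A₀) ψ = 0 ∧ (B₀ * B₁ + B₁ * B₀) ψ = 0 :=
  stmt_11_general A₀ A₁ B₀ B₁ hA₀s hA₁s hB₀s hB₁s hA₀ hA₁ hB₀ hB₁ h₀₀ h₀₁ h₁₀ h₁₁ ψ hψ hopt
end

section
/- Let n ≥ 2, z = e^{iπ/(2n)}, γ_n = √(2n + 2/sin(π/(2n))), and λ_i = |1 − z^{2i+n+1}|/γ_n for i ∈ {0,...,n-1}. Then ∑_i λ_i² = 1, each λ_i > 0, and the entropy S_n = −∑_i λ_i² log(λ_i²) satisfies S_n/log(n) → 1 as n → ∞. -/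
open Finset Filter

/-- `z_n = e^{iπ/(2n)}`. -/
noncomputable def zc (n : ℕ) : ℂ := Complex.exp (Real.pi * Complex.I / (2 * n))

/-- The normalization factor `γ_n`. -/
noncomputable def gam (n : ℕ) : ℝ := Real.sqrt (2 * n + 2 / Real.sin (Real.pi / (2 * n)))

/-- The Schmidt coefficients `λ_i` of `|ψ_n⟩`. -/
noncomputable def lam (n i : ℕ) : ℝ := ‖1 - zc n ^ (2 * i + n + 1)‖ / gam n

/-- The entanglement entropy `S_n = -∑ λ_i² log λ_i²`. -/
noncomputable def entS (n : ℕ) : ℝ :=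
  -∑ i ∈ Finset.range n, (lam n i) ^ 2 * Real.log ((lam n i) ^ 2)

private lemma zc_pow (n k : ℕ) :
    zc n ^ k = Complex.exp ((((k : ℝ) * (Real.pi / (2 * n))) : ℝ) * Complex.I) := by
  rw [zc, ← Complex.exp_nat_mul]
  congr 1
  push_cast
  ring

private lemma sin_pos (n : ℕ) (hn : 2 ≤ n) : 0 < Real.sin (Real.pi / (2 * n)) := by
  have hn' : (1 : ℝ) ≤ n := by exact_mod_cast (by omega : 1 ≤ n)
  apply Real.sin_pos_of_pos_of_lt_pi
  · exact div_pos Real.pi_pos (by nlinarith)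
  · exact div_lt_self Real.pi_pos (by nlinarith)

private lemma gam_sq (n : ℕ) (hn : 2 ≤ n) :
    gam n ^ 2 = 2 * n + 2 / Real.sin (Real.pi / (2 * n)) := by
  have hs := sin_pos n hn
  exact Real.sq_sqrt (by positivity)

private lemma gam_pos (n : ℕ) (hn : 2 ≤ n) : 0 < gam n := by
  have hs := sin_pos n hn
  exact Real.sqrt_pos.mpr (by positivity)

private lemma sum_zc (n : ℕ) (hn : 2 ≤ n) :
    ∑ i ∈ Finset.range n, zc n ^ (2 * i + n + 1)
      = -(1 / ((Real.sin (Real.pi / (2 * n)) : ℝ) : ℂ)) := by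
  have hn0 : 0 < n := by omega
  have hn' : (1 : ℝ) ≤ n := by exact_mod_cast (by omega : 1 ≤ n)
  have hne : (n : ℂ) ≠ 0 := Nat.cast_ne_zero.mpr hn0.ne'
  set t : ℝ := Real.pi / (2 * n) with ht
  have ht0 : 0 < t := div_pos Real.pi_pos (by nlinarith)
  have htpi : t < Real.pi := div_lt_self Real.pi_pos (by nlinarith)
  have hs : 0 < Real.sin t := Real.sin_pos_of_pos_of_lt_pi ht0 htpi
  set z : ℂ := zc n with hzdef
  have hz1 : z = Complex.exp ((t : ℂ) * Complex.I) := by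
    rw [hzdef, zc]
    congr 1
    rw [ht]
    push_cast
    ring
  have hzc : z = (Real.cos t : ℂ) + (Real.sin t : ℂ) * Complex.I := by
    rw [hz1, Complex.exp_mul_I, Complex.ofReal_cos, Complex.ofReal_sin]
  have hz0 : z ≠ 0 := by rw [hz1]; exact Complex.exp_ne_zero _
  have hsz : (Real.sin t : ℂ) ≠ 0 := by exact_mod_cast hs.ne'
  have key : z ^ 2 - 1 = z * (2 * Complex.I * (Real.sin t : ℂ)) := by
    have h' : (Real.sin t : ℂ) ^ 2 + (Real.cos t : ℂ) ^ 2 = 1 := by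
      exact_mod_cast Real.sin_sq_add_cos_sq t
    rw [hzc]
    linear_combination h' - (Real.sin t : ℂ) ^ 2 * Complex.I_sq
  have hz2 : z ^ 2 ≠ 1 := by
    intro h
    have h0 : z * (2 * Complex.I * (Real.sin t : ℂ)) = 0 := by rw [← key, h]; ring
    exact (mul_ne_zero hz0
      (mul_ne_zero (mul_ne_zero two_ne_zero Complex.I_ne_zero) hsz)) h0
  have h2n : z ^ (2 * n) = -1 := by
    rw [hzdef, zc, ← Complex.exp_nat_mul, ← Complex.exp_pi_mul_I]
    congr 1
    push_cast
    field_simp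
  have hnn : z ^ n = Complex.I := by
    rw [hzdef, zc, ← Complex.exp_nat_mul]
    have he : (n : ℂ) * (Real.pi * Complex.I / (2 * n)) = ((Real.pi / 2 : ℝ) : ℂ) * Complex.I := by
      push_cast
      field_simp
    rw [he, Complex.exp_mul_I]
    simp [← Complex.ofReal_cos, ← Complex.ofReal_sin]
  have step : ∀ i ∈ Finset.range n, z ^ (2 * i + n + 1) = z ^ (n + 1) * (z ^ 2) ^ i := by
    intro i _
    rw [← pow_mul, ← pow_add]
    congr 1
    omega
  set s : ℂ := ((Real.sin t : ℝ) : ℂ) with hsdef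
  rw [Finset.sum_congr rfl step, ← Finset.mul_sum, geom_sum_eq hz2, ← pow_mul, h2n, key,
    pow_succ, hnn]
  field_simp [hz0, hsz, Complex.I_ne_zero]
  ring

private lemma normsq_term (n i : ℕ) :
    ‖1 - zc n ^ (2 * i + n + 1)‖ ^ 2 = 2 - 2 * (zc n ^ (2 * i + n + 1)).re := by
  have habs : ‖zc n ^ (2 * i + n + 1)‖ = 1 := by
    rw [zc_pow]
    exact Complex.norm_exp_ofReal_mul_I _
  rw [Complex.sq_norm, Complex.normSq_sub, Complex.normSq_one,
    ← Complex.sq_norm (zc n ^ (2 * i + n + 1)), habs, one_mul, Complex.conj_re]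
  norm_num

private lemma sum_abs_sq (n : ℕ) (hn : 2 ≤ n) :
    ∑ i ∈ Finset.range n, ‖1 - zc n ^ (2 * i + n + 1)‖ ^ 2
      = 2 * n + 2 / Real.sin (Real.pi / (2 * n)) := by
  have hre : (∑ i ∈ Finset.range n, (zc n ^ (2 * i + n + 1)).re)
      = -(1 / Real.sin (Real.pi / (2 * n))) := by
    rw [← Complex.re_sum, sum_zc n hn]
    rw [show -(1 / ((Real.sin (Real.pi / (2 * n)) : ℝ) : ℂ))
        = ((-(1 / Real.sin (Real.pi / (2 * n))) : ℝ) : ℂ) by push_cast; ring]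
    exact Complex.ofReal_re _
  calc ∑ i ∈ Finset.range n, ‖1 - zc n ^ (2 * i + n + 1)‖ ^ 2
      = ∑ i ∈ Finset.range n, (2 - 2 * (zc n ^ (2 * i + n + 1)).re) :=
        Finset.sum_congr rfl fun i _ => normsq_term n i
    _ = 2 * n + 2 / Real.sin (Real.pi / (2 * n)) := by
        rw [Finset.sum_sub_distrib, ← Finset.mul_sum, hre, Finset.sum_const, Finset.card_range]
        simp [nsmul_eq_mul]
        ring

private lemma sum_one (n : ℕ) (hn : 2 ≤ n) :
    ∑ i ∈ Finset.range n, (lam n i) ^ 2 = 1 := by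
  simp_rw [lam, div_pow]
  rw [← Finset.sum_div, sum_abs_sq n hn, ← gam_sq n hn,
    div_self (pow_ne_zero _ (gam_pos n hn).ne')]

private lemma lam_pos (n : ℕ) (hn : 2 ≤ n) (i : ℕ) (hi : i < n) : 0 < lam n i := by
  have hn' : (2 : ℝ) ≤ n := by exact_mod_cast hn
  apply div_pos _ (gam_pos n hn)
  apply norm_pos_iff.mpr
  rw [sub_ne_zero]
  intro h
  have h1 : zc n ^ (2 * i + n + 1) = 1 := h.symm
  rw [zc_pow, Complex.exp_eq_one_iff] at h1
  obtain ⟨m, hm⟩ := h1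
  set k : ℕ := 2 * i + n + 1 with hk
  have h2 : (((k : ℝ) * (Real.pi / (2 * n)) : ℝ) : ℂ) * Complex.I
      = ((2 * Real.pi * (m : ℝ) : ℝ) : ℂ) * Complex.I := by
    rw [hm]; push_cast; ring
  have h3 := mul_right_cancel₀ Complex.I_ne_zero h2
  have hx : (k : ℝ) * (Real.pi / (2 * n)) = 2 * Real.pi * m := by exact_mod_cast h3
  have hkpos : (0 : ℝ) < k := by exact_mod_cast (by omega : 0 < k)
  have hk1 : (0 : ℝ) < (k : ℝ) * (Real.pi / (2 * n)) :=
    mul_pos hkpos (div_pos Real.pi_pos (by nlinarith))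
  have hkn : (k : ℝ) < 4 * n := by exact_mod_cast (by omega : k < 4 * n)
  have hk2 : (k : ℝ) * (Real.pi / (2 * n)) < 2 * Real.pi := by
    rw [← mul_div_assoc, div_lt_iff₀ (by nlinarith : (0 : ℝ) < 2 * n)]
    nlinarith [Real.pi_pos]
  rw [hx] at hk1 hk2
  have hm0 : (0 : ℤ) < m := by
    by_contra hc
    push_neg at hc
    have : (m : ℝ) ≤ 0 := by exact_mod_cast hc
    nlinarith [Real.pi_pos]
  have hm1 : (1 : ℝ) ≤ m := by exact_mod_cast hm0
  nlinarith [Real.pi_pos]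

private lemma entS_le (n : ℕ) (hn : 2 ≤ n) : entS n ≤ Real.log n := by
  have hn' : (0 : ℝ) < n := by exact_mod_cast (by omega : 0 < n)
  have hsum := sum_one n hn
  have key : ∀ i ∈ Finset.range n,
      -(Real.log n) * (lam n i) ^ 2 - (lam n i) ^ 2 * Real.log ((lam n i) ^ 2)
        ≤ 1 / n - (lam n i) ^ 2 := by
    intro i hi
    have hp : 0 < (lam n i) ^ 2 := pow_pos (lam_pos n hn i (Finset.mem_range.mp hi)) 2
    have h1 : Real.log (1 / (n * (lam n i) ^ 2)) ≤ 1 / (n * (lam n i) ^ 2) - 1 :=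
      Real.log_le_sub_one_of_pos (by positivity)
    have h2 : Real.log (1 / (n * (lam n i) ^ 2))
        = -(Real.log n) - Real.log ((lam n i) ^ 2) := by
      rw [one_div, Real.log_inv, Real.log_mul hn'.ne' hp.ne']
      ring
    have h3 := mul_le_mul_of_nonneg_left h1 hp.le
    rw [h2] at h3
    have h4 : (lam n i) ^ 2 * (1 / (n * (lam n i) ^ 2) - 1) = 1 / n - (lam n i) ^ 2 := by
      field_simp
      rw [mul_sub, mul_one_div_cancel hp.ne']
    calc -(Real.log n) * (lam n i) ^ 2 - (lam n i) ^ 2 * Real.log ((lam n i) ^ 2)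
        = (lam n i) ^ 2 * (-(Real.log n) - Real.log ((lam n i) ^ 2)) := by ring
      _ ≤ (lam n i) ^ 2 * (1 / (n * (lam n i) ^ 2) - 1) := h3
      _ = 1 / n - (lam n i) ^ 2 := h4
  have hsumle := Finset.sum_le_sum key
  rw [Finset.sum_sub_distrib, Finset.sum_sub_distrib, ← Finset.mul_sum, hsum,
    Finset.sum_const, Finset.card_range] at hsumle
  simp only [nsmul_eq_mul, mul_one] at hsumle
  have hone : (n : ℝ) * (1 / n) = 1 := by field_simp
  unfold entS
  linarith

private lemma le_entS (n : ℕ) (hn : 2 ≤ n) : Real.log n - Real.log 2 ≤ entS n := by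
  have hn' : (2 : ℝ) ≤ n := by exact_mod_cast hn
  have hsum := sum_one n hn
  have key : ∀ i ∈ Finset.range n,
      (Real.log n - Real.log 2) * (lam n i) ^ 2
        ≤ -((lam n i) ^ 2 * Real.log ((lam n i) ^ 2)) := by
    intro i hi
    have hp : 0 < (lam n i) ^ 2 := pow_pos (lam_pos n hn i (Finset.mem_range.mp hi)) 2
    have habs : ‖1 - zc n ^ (2 * i + n + 1)‖ ≤ 2 := by
      calc ‖1 - zc n ^ (2 * i + n + 1)‖
          ≤ ‖(1 : ℂ)‖ + ‖zc n ^ (2 * i + n + 1)‖ := by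
            simpa using norm_sub_le (1 : ℂ) (zc n ^ (2 * i + n + 1))
        _ = 2 := by
            rw [norm_one]
            rw [zc_pow, Complex.norm_exp_ofReal_mul_I]
            norm_num
    have hple : (lam n i) ^ 2 ≤ 2 / n := by
      rw [lam, div_pow]
      have h4 : ‖1 - zc n ^ (2 * i + n + 1)‖ ^ 2 ≤ 4 := by
        nlinarith [norm_nonneg (1 - zc n ^ (2 * i + n + 1))]
      have hg : 2 * (n : ℝ) ≤ gam n ^ 2 := by
        rw [gam_sq n hn]
        have hs := sin_pos n hn
        have := le_of_lt (div_pos (two_pos : (0:ℝ) < 2) hs)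
        linarith
      calc ‖1 - zc n ^ (2 * i + n + 1)‖ ^ 2 / gam n ^ 2
          ≤ 4 / (2 * (n : ℝ)) := div_le_div₀ (by norm_num) h4 (by nlinarith) hg
        _ = 2 / n := by
            rw [show (4 : ℝ) = 2 * 2 by norm_num, mul_div_mul_left _ _ (two_ne_zero)]
    have hlog : Real.log ((lam n i) ^ 2) ≤ Real.log 2 - Real.log n := by
      calc Real.log ((lam n i) ^ 2) ≤ Real.log (2 / n) := Real.log_le_log hp hple
        _ = Real.log 2 - Real.log n := Real.log_div two_ne_zero (by nlinarith)
    nlinarith [mul_le_mul_of_nonneg_left hlog hp.le]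
  have h := Finset.sum_le_sum key
  rw [← Finset.mul_sum, hsum, mul_one, Finset.sum_neg_distrib] at h
  unfold entS
  linarith

theorem stmt_14 :
    (∀ n : ℕ, 2 ≤ n →
      (∑ i ∈ Finset.range n, (lam n i) ^ 2 = 1) ∧ ∀ i ∈ Finset.range n, 0 < lam n i) ∧
    Filter.Tendsto (fun n : ℕ => entS n / Real.log n) Filter.atTop (nhds 1) := by
  constructor
  · intro n hn
    exact ⟨sum_one n hn, fun i hi => lam_pos n hn i (Finset.mem_range.mp hi)⟩
  · have hlim : Tendsto (fun n : ℕ => 1 - Real.log 2 / Real.log n) atTop (nhds 1) := by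
      have h0 : Tendsto (fun n : ℕ => Real.log 2 / Real.log n) atTop (nhds 0) :=
        Tendsto.div_atTop tendsto_const_nhds
          (Real.tendsto_log_atTop.comp tendsto_natCast_atTop_atTop)
      simpa using (tendsto_const_nhds (x := (1 : ℝ))).sub h0
    apply tendsto_of_tendsto_of_tendsto_of_le_of_le' hlim tendsto_const_nhds
    · filter_upwards [eventually_ge_atTop 2] with n hn
      have hlog : 0 < Real.log n := Real.log_pos (by exact_mod_cast (by omega : 1 < n))
      have heq : (Real.log n - Real.log 2) / Real.log n = 1 - Real.log 2 / Real.log n := by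
        rw [sub_div, div_self hlog.ne']
      rw [← heq]
      exact (div_le_div_iff_of_pos_right hlog).mpr (le_entS n hn)
    · filter_upwards [eventually_ge_atTop 2] with n hn
      have hlog : 0 < Real.log n := Real.log_pos (by exact_mod_cast (by omega : 1 < n))
      exact (div_le_one hlog).mpr (entS_le n hn)
end

section
/- Let ω = e^{2πi/3} and let A₀, A₁, B₀, B₁ be unitaries with A₀³ = A₁³ = B₀³ = B₁³ = I and [Aᵢ,Bⱼ] = 0, and |ψ⟩ a unit vector satisfying A₀B₀*|ψ⟩ = ω*A₁B₁|ψ⟩, A₀*B₀|ψ⟩ = ωA₁*B₁*|ψ⟩, A₀B₁|ψ⟩ = A₁B₀*|ψ⟩, A₀*B₁*|ψ⟩ = A₁*B₀|ψ⟩. Then A₀*A₁|ψ⟩ = ωA₁*A₀|ψ⟩ and A₁A₀*|ψ⟩ = ωA₀A₁*|ψ⟩. -/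
private theorem aux_star {M : Type*} [Monoid M] [StarMul M] (A : M)
    (hu : A ∈ unitary M) (h3 : A ^ 3 = 1) : star A = A ^ 2 := by
  calc star A = star A * A ^ 3 := by rw [h3, mul_one]
    _ = (star A * A) * A ^ 2 := by rw [pow_succ', ← mul_assoc]
    _ = A ^ 2 := by rw [hu.1, one_mul]

theorem stmt_15 {H : Type*} [NormedAddCommGroup H] [InnerProductSpace ℂ H]
    [FiniteDimensional ℂ H] [CompleteSpace H]
    (ω : ℂ) (hω : ω = Complex.exp (2 * Real.pi * Complex.I / 3))
    (A₀ A₁ B₀ B₁ : H →L[ℂ] H)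
    (hA₀u : A₀ ∈ unitary (H →L[ℂ] H)) (hA₁u : A₁ ∈ unitary (H →L[ℂ] H))
    (hB₀u : B₀ ∈ unitary (H →L[ℂ] H)) (hB₁u : B₁ ∈ unitary (H →L[ℂ] H))
    (hA₀ : A₀ ^ 3 = 1) (hA₁ : A₁ ^ 3 = 1) (hB₀ : B₀ ^ 3 = 1) (hB₁ : B₁ ^ 3 = 1)
    (h₀₀ : Commute A₀ B₀) (h₀₁ : Commute A₀ B₁) (h₁₀ : Commute A₁ B₀) (h₁₁ : Commute A₁ B₁)
    (ψ : H) (hψ : ‖ψ‖ = 1)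
    (h1 : (A₀ * star B₀) ψ = (starRingEnd ℂ) ω • (A₁ * B₁) ψ)
    (h2 : (star A₀ * B₀) ψ = ω • (star A₁ * star B₁) ψ)
    (h3 : (A₀ * B₁) ψ = (A₁ * star B₀) ψ)
    (h4 : (star A₀ * star B₁) ψ = (star A₁ * B₀) ψ) :
    (star A₀ * A₁) ψ = ω • (star A₁ * A₀) ψ ∧
      (A₁ * star A₀) ψ = ω • (A₀ * star A₁) ψ := by
  have sA₀ : star A₀ = A₀ ^ 2 := aux_star A₀ hA₀u hA₀
  have sA₁ : star A₁ = A₁ ^ 2 := aux_star A₁ hA₁u hA₁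
  have sB₀ : star B₀ = B₀ ^ 2 := aux_star B₀ hB₀u hB₀
  have sB₁ : star B₁ = B₁ ^ 2 := aux_star B₁ hB₁u hB₁
  rw [sB₀] at h1 h3
  rw [sA₀, sA₁, sB₁] at h2 h4
  rw [sA₀, sA₁]
  -- ω has modulus 1
  have habs : ‖ω‖ = 1 := by
    rw [hω, Complex.norm_exp]
    have : (2 * (Real.pi : ℂ) * Complex.I / 3).re = 0 := by
      simp [Complex.div_re]
    rw [this, Real.exp_zero]
  have hωω : ω * (starRingEnd ℂ) ω = 1 := by
    rw [Complex.mul_conj, Complex.normSq_eq_norm_sq, habs]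
    norm_num
  -- operator identities
  have i1 : (A₀ ^ 2 * B₀) * (A₀ * B₁) = B₀ * B₁ := by
    rw [h₀₀.symm.mul_mul_mul_comm, ← pow_succ, hA₀, one_mul]
  have i2 : (A₀ ^ 2 * B₀) * (A₁ * B₀ ^ 2) = A₀ ^ 2 * A₁ := by
    rw [h₁₀.symm.mul_mul_mul_comm, ← pow_succ', hB₀, mul_one]
  have i3 : (A₁ ^ 2 * B₀) * (A₀ * B₀ ^ 2) = A₁ ^ 2 * A₀ := by
    rw [h₀₀.symm.mul_mul_mul_comm, ← pow_succ', hB₀, mul_one]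
  have i4 : (A₁ ^ 2 * B₀) * (A₁ * B₁) = B₀ * B₁ := by
    rw [h₁₀.symm.mul_mul_mul_comm, ← pow_succ, hA₁, one_mul]
  have i5 : (A₁ * B₀ ^ 2) * (A₀ ^ 2 * B₀) = A₁ * A₀ ^ 2 := by
    rw [((h₀₀.pow_pow 2 2).symm).mul_mul_mul_comm, ← pow_succ, hB₀, mul_one]
  have i6 : (A₁ * B₀ ^ 2) * (A₁ ^ 2 * B₁ ^ 2) = B₀ ^ 2 * B₁ ^ 2 := by
    rw [((h₁₀.pow_pow 2 2).symm).mul_mul_mul_comm, ← pow_succ', hA₁, one_mul]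
  have i7 : (A₀ * B₀ ^ 2) * (A₀ ^ 2 * B₁ ^ 2) = B₀ ^ 2 * B₁ ^ 2 := by
    rw [((h₀₀.pow_pow 2 2).symm).mul_mul_mul_comm, ← pow_succ', hA₀, one_mul]
  have i8 : (A₀ * B₀ ^ 2) * (A₁ ^ 2 * B₀) = A₀ * A₁ ^ 2 := by
    rw [((h₁₀.pow_pow 2 2).symm).mul_mul_mul_comm, ← pow_succ, hB₀, mul_one]
  -- vector identities
  have e1 : (A₁ ^ 2 * A₀) ψ = (starRingEnd ℂ) ω • (B₀ * B₁) ψ := by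
    have e := congrArg (⇑(A₁ ^ 2 * B₀)) h1
    rw [map_smul, ← ContinuousLinearMap.mul_apply, ← ContinuousLinearMap.mul_apply,
      i3, i4] at e
    exact e
  have e3 : (B₀ * B₁) ψ = (A₀ ^ 2 * A₁) ψ := by
    have e := congrArg (⇑(A₀ ^ 2 * B₀)) h3
    rw [← ContinuousLinearMap.mul_apply, ← ContinuousLinearMap.mul_apply, i1, i2] at e
    exact e
  have e2 : (A₁ * A₀ ^ 2) ψ = ω • (B₀ ^ 2 * B₁ ^ 2) ψ := by
    have e := congrArg (⇑(A₁ * B₀ ^ 2)) h2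
    rw [map_smul, ← ContinuousLinearMap.mul_apply, ← ContinuousLinearMap.mul_apply,
      i5, i6] at e
    exact e
  have e4 : (B₀ ^ 2 * B₁ ^ 2) ψ = (A₀ * A₁ ^ 2) ψ := by
    have e := congrArg (⇑(A₀ * B₀ ^ 2)) h4
    rw [← ContinuousLinearMap.mul_apply, ← ContinuousLinearMap.mul_apply, i7, i8] at e
    exact e
  constructor
  · rw [← e3, e1, smul_smul, hωω, one_smul]
  · rw [e2, e4]
end

section
/- The 2×2 matrices A₁ = I⊗σ_Z through A₉ = σ_Y⊗σ_Y of the Mermin–Peres magic square satisfy: each Aᵢ² = I, the three operators in each row and each column pairwise commute, each of the five single-line products (rows 1–3, columns 1–2) equals I, and the product of the third column A₃A₆A₉ equals −I. -/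
/-!
Every `Aᵢ` is a Kronecker product of two of `1, σX, σY, σZ`, and products of Kronecker
products are computed factorwise. So each `Aᵢ` squares to `1 ⊗ 1`, and two entries of a
line commute because their tensor factors either commute in both slots or anticommute in
both, and then the two signs cancel. The line products reduce to `σZ σX σY = i` and
`σX σZ σY = -i`: row 3 is `(-i)(i) = 1`, while column 3 is `i · i = -1`.
-/

open Matrix
open scoped Kronecker

noncomputable def σX : Matrix (Fin 2) (Fin 2) ℂ := !![0, 1; 1, 0]
noncomputable def σY : Matrix (Fin 2) (Fin 2) ℂ := !![0, -Complex.I; Complex.I, 0]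
noncomputable def σZ : Matrix (Fin 2) (Fin 2) ℂ := !![1, 0; 0, -1]

noncomputable def A₁ : Matrix (Fin 2 × Fin 2) (Fin 2 × Fin 2) ℂ := (1 : Matrix (Fin 2) (Fin 2) ℂ) ⊗ₖ σZ
noncomputable def A₂ : Matrix (Fin 2 × Fin 2) (Fin 2 × Fin 2) ℂ := σZ ⊗ₖ (1 : Matrix (Fin 2) (Fin 2) ℂ)
noncomputable def A₃ : Matrix (Fin 2 × Fin 2) (Fin 2 × Fin 2) ℂ := σZ ⊗ₖ σZ
noncomputable def A₄ : Matrix (Fin 2 × Fin 2) (Fin 2 × Fin 2) ℂ := σX ⊗ₖ (1 : Matrix (Fin 2) (Fin 2) ℂ)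
noncomputable def A₅ : Matrix (Fin 2 × Fin 2) (Fin 2 × Fin 2) ℂ := (1 : Matrix (Fin 2) (Fin 2) ℂ) ⊗ₖ σX
noncomputable def A₆ : Matrix (Fin 2 × Fin 2) (Fin 2 × Fin 2) ℂ := σX ⊗ₖ σX
noncomputable def A₇ : Matrix (Fin 2 × Fin 2) (Fin 2 × Fin 2) ℂ := σX ⊗ₖ σZ
noncomputable def A₈ : Matrix (Fin 2 × Fin 2) (Fin 2 × Fin 2) ℂ := σZ ⊗ₖ σX
noncomputable def A₉ : Matrix (Fin 2 × Fin 2) (Fin 2 × Fin 2) ℂ := σY ⊗ₖ σY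

namespace Matrix

variable {R m n : Type*}

theorem kronecker_sq_eq_one [Fintype m] [Fintype n] [DecidableEq m] [DecidableEq n]
    [CommSemiring R] {A : Matrix m m R} {B : Matrix n n R} (hA : A * A = 1) (hB : B * B = 1) :
    (A ⊗ₖ B) ^ 2 = 1 := by
  rw [sq, ← mul_kronecker_mul, hA, hB, one_kronecker_one]

theorem _root_.Commute.kronecker [Fintype m] [Fintype n] [CommSemiring R]
    {A A' : Matrix m m R} {B B' : Matrix n n R} (hA : Commute A A') (hB : Commute B B') :
    Commute (A ⊗ₖ B) (A' ⊗ₖ B') := by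
  rw [Commute, SemiconjBy, ← mul_kronecker_mul, ← mul_kronecker_mul, hA.eq, hB.eq]

theorem neg_kronecker_neg {l p : Type*} [Mul R] [HasDistribNeg R] (A : Matrix l m R)
    (B : Matrix n p R) : (-A) ⊗ₖ (-B) = A ⊗ₖ B := by
  ext ⟨i, j⟩ ⟨k, l⟩
  simp only [kronecker_apply, neg_apply, neg_mul_neg]

theorem smul_one_kronecker_smul_one [DecidableEq m] [DecidableEq n] [CommSemiring R]
    (a b : R) : (a • 1 : Matrix m m R) ⊗ₖ (b • 1 : Matrix n n R) = (a * b) • 1 := by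
  rw [smul_kronecker, kronecker_smul, one_kronecker_one, smul_smul, mul_comm]

end Matrix

def Anticommute {M : Type*} [Mul M] [Neg M] (a b : M) : Prop := a * b = -(b * a)

theorem Anticommute.symm {M : Type*} [Mul M] [InvolutiveNeg M] {a b : M}
    (h : Anticommute a b) : Anticommute b a := by
  rw [Anticommute, h, neg_neg]

theorem Anticommute.kronecker {R m n : Type*} [Fintype m] [Fintype n] [CommRing R]
    {A A' : Matrix m m R} {B B' : Matrix n n R}
    (hA : Anticommute A A') (hB : Anticommute B B') : Commute (A ⊗ₖ B) (A' ⊗ₖ B') := by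
  rw [Commute, SemiconjBy, ← mul_kronecker_mul, ← mul_kronecker_mul, hA, hB, neg_kronecker_neg]

theorem σX_mul_self : σX * σX = 1 := by
  simp [σX, one_fin_two]

theorem σY_mul_self : σY * σY = 1 := by
  simp [σY, one_fin_two]

theorem σZ_mul_self : σZ * σZ = 1 := by
  simp [σZ, one_fin_two]

theorem anticommute_σX_σY : Anticommute σX σY := by
  simp [Anticommute, σX, σY]

theorem anticommute_σX_σZ : Anticommute σX σZ := by
  simp [Anticommute, σX, σZ]

theorem anticommute_σZ_σY : Anticommute σZ σY := by
  simp [Anticommute, σZ, σY]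

theorem σZ_mul_σX_mul_σY : σZ * σX * σY = Complex.I • 1 := by
  simp [σX, σY, σZ, one_fin_two]

theorem σX_mul_σZ_mul_σY : σX * σZ * σY = -Complex.I • 1 := by
  rw [anticommute_σX_σZ, neg_mul, σZ_mul_σX_mul_σY, neg_smul]

theorem stmt_17 :
    (A₁ ^ 2 = 1 ∧ A₂ ^ 2 = 1 ∧ A₃ ^ 2 = 1 ∧ A₄ ^ 2 = 1 ∧ A₅ ^ 2 = 1 ∧
      A₆ ^ 2 = 1 ∧ A₇ ^ 2 = 1 ∧ A₈ ^ 2 = 1 ∧ A₉ ^ 2 = 1) ∧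
    (Commute A₁ A₂ ∧ Commute A₁ A₃ ∧ Commute A₂ A₃) ∧
    (Commute A₄ A₅ ∧ Commute A₄ A₆ ∧ Commute A₅ A₆) ∧
    (Commute A₇ A₈ ∧ Commute A₇ A₉ ∧ Commute A₈ A₉) ∧
    (Commute A₁ A₄ ∧ Commute A₁ A₇ ∧ Commute A₄ A₇) ∧
    (Commute A₂ A₅ ∧ Commute A₂ A₈ ∧ Commute A₅ A₈) ∧
    (Commute A₃ A₆ ∧ Commute A₃ A₉ ∧ Commute A₆ A₉) ∧
    (A₁ * A₂ * A₃ = 1 ∧ A₄ * A₅ * A₆ = 1 ∧ A₇ * A₈ * A₉ = 1 ∧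
      A₁ * A₄ * A₇ = 1 ∧ A₂ * A₅ * A₈ = 1) ∧
    A₃ * A₆ * A₉ = -1 := by
  have h1 : (1 : Matrix (Fin 2) (Fin 2) ℂ) * 1 = 1 := mul_one 1
  have hX := σX_mul_self
  have hY := σY_mul_self
  have hZ := σZ_mul_self
  have hXY := anticommute_σX_σY
  have hXZ := anticommute_σX_σZ
  have hZY := anticommute_σZ_σY
  have hlines : A₁ * A₂ * A₃ = 1 ∧ A₄ * A₅ * A₆ = 1 ∧ A₁ * A₄ * A₇ = 1 ∧ A₂ * A₅ * A₈ = 1 := by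
    simp only [A₁, A₂, A₃, A₄, A₅, A₆, A₇, A₈, ← mul_kronecker_mul, one_mul, mul_one, hX, hZ,
      one_kronecker_one, and_self]
  have hrow₃ : A₇ * A₈ * A₉ = 1 := by
    rw [A₇, A₈, A₉, ← mul_kronecker_mul, ← mul_kronecker_mul, σX_mul_σZ_mul_σY, σZ_mul_σX_mul_σY,
      smul_one_kronecker_smul_one, neg_mul, Complex.I_mul_I, neg_neg, one_smul]
  have hcol₃ : A₃ * A₆ * A₉ = -1 := by
    rw [A₃, A₆, A₉, ← mul_kronecker_mul, ← mul_kronecker_mul, σZ_mul_σX_mul_σY,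
      smul_one_kronecker_smul_one, Complex.I_mul_I, neg_one_smul]
  refine ⟨⟨kronecker_sq_eq_one h1 hZ, kronecker_sq_eq_one hZ h1, kronecker_sq_eq_one hZ hZ,
      kronecker_sq_eq_one hX h1, kronecker_sq_eq_one h1 hX, kronecker_sq_eq_one hX hX,
      kronecker_sq_eq_one hX hZ, kronecker_sq_eq_one hZ hX, kronecker_sq_eq_one hY hY⟩,
    ⟨?_, ?_, ?_⟩, ⟨?_, ?_, ?_⟩,
    ⟨hXZ.kronecker hXZ.symm, hXY.kronecker hZY, hZY.kronecker hXY⟩,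
    ⟨?_, ?_, ?_⟩, ⟨?_, ?_, ?_⟩,
    ⟨hXZ.symm.kronecker hXZ.symm, hZY.kronecker hZY, hXY.kronecker hXY⟩,
    ⟨hlines.1, hlines.2.1, hrow₃, hlines.2.2⟩, hcol₃⟩
  all_goals exact Commute.kronecker (by simp) (by simp)
end

section
/- Let f : G → U(H_A) be a map from a finite group into unitaries on a finite-dimensional Hilbert space H_A, and |ψ⟩ ∈ H_A ⊗ H_B a state such that f(y)*f(x)f(x⁻¹y) ⊗ I |ψ⟩ = |ψ⟩ for all x, y ∈ G. Then f(x)f(y) ⊗ I |ψ⟩ = f(xy) ⊗ I |ψ⟩ for all x, y ∈ G; in particular each f(x) preserves the subspace H₀ = span{(f(g)⊗I)|ψ⟩ : g ∈ G} of H_A ⊗ H_B, and x ↦ f(x)|_{H₀} is a group homomorphism into the unitaries of H₀. -/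
/-!
Taking `y := x * z` in the hypothesis gives `(f (x z)⋆ f x f z ⊗ I) ψ = ψ`; applying the unitary
`f (x z) ⊗ I` to both sides yields `(f x f z ⊗ I) ψ = (f (x z) ⊗ I) ψ`. Consequently `f x ⊗ I`
sends the generator `(f g ⊗ I) ψ` of `H₀` to the generator `(f (x g) ⊗ I) ψ`, so the restrictions
to `H₀` are multiplicative on generators, hence on all of `H₀` by linearity.
-/

open TensorProduct

section OrbitSpan

variable {A G R V : Type*} [Monoid A] [Group G] [CommSemiring R] [AddCommMonoid V] [Module R V]

theorem apply_mul_eq_of_apply_star_mul_mul_eq [StarMul A] (ρ : A →* Module.End R V)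
    {a b c : A} (hc : c ∈ unitary A) {v : V} (h : ρ (star c * a * b) v = v) :
    ρ (a * b) v = ρ c v := by
  calc ρ (a * b) v = ρ (c * (star c * a * b)) v := by
        rw [← mul_assoc, ← mul_assoc, Unitary.mul_star_self_of_mem hc, one_mul]
    _ = ρ c v := by rw [map_mul, Module.End.mul_apply, h]

theorem apply_mul_eq_apply_of_apply_star_mul_mul_eq [StarMul A] (ρ : A →* Module.End R V)
    {f : G → A} (hf : ∀ x, f x ∈ unitary A) {v : V}
    (hrep : ∀ x y, ρ (star (f y) * f x * f (x⁻¹ * y)) v = v) (x y : G) :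
    ρ (f x * f y) v = ρ (f (x * y)) v := by
  refine apply_mul_eq_of_apply_star_mul_mul_eq ρ (hf (x * y)) ?_
  simpa only [inv_mul_cancel_left] using hrep x (x * y)

def orbitSpan (ρ : A →* Module.End R V) (f : G → A) (v : V) : Submodule R V :=
  Submodule.span R {w | ∃ g, w = ρ (f g) v}

variable {ρ : A →* Module.End R V} {f : G → A} {v : V}
  (hmul : ∀ x y, ρ (f x * f y) v = ρ (f (x * y)) v)
include hmul

theorem apply_apply_orbit (x g : G) : ρ (f x) (ρ (f g) v) = ρ (f (x * g)) v := by
  rw [← hmul, map_mul, Module.End.mul_apply]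

theorem apply_mem_orbitSpan (x : G) {w : V} (hw : w ∈ orbitSpan ρ f v) :
    ρ (f x) w ∈ orbitSpan ρ f v := by
  suffices orbitSpan ρ f v ≤ (orbitSpan ρ f v).comap (ρ (f x)) from this hw
  refine Submodule.span_le.mpr ?_
  rintro _ ⟨g, rfl⟩
  exact Submodule.subset_span ⟨x * g, apply_apply_orbit hmul x g⟩

theorem apply_one_eq_self_of_mem_orbitSpan {w : V} (hw : w ∈ orbitSpan ρ f v) :
    ρ (f 1) w = w := by
  refine LinearMap.eqOn_span (g := LinearMap.id) ?_ hw
  rintro _ ⟨g, rfl⟩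
  rw [apply_apply_orbit hmul, one_mul, LinearMap.id_apply]

theorem apply_apply_eq_apply_mul_of_mem_orbitSpan (x y : G) {w : V}
    (hw : w ∈ orbitSpan ρ f v) : ρ (f x) (ρ (f y) w) = ρ (f (x * y)) w := by
  refine LinearMap.eqOn_span (f := ρ (f x) * ρ (f y)) ?_ hw
  rintro _ ⟨g, rfl⟩
  simp only [Module.End.mul_apply, apply_apply_orbit hmul, mul_assoc]

end OrbitSpan

theorem stmt_19_general {G : Type*} [Group G]
    {HA HB : Type*} [NormedAddCommGroup HA] [InnerProductSpace ℂ HA]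
    [CompleteSpace HA]
    [NormedAddCommGroup HB] [InnerProductSpace ℂ HB]
    (f : G → (HA →L[ℂ] HA)) (hf : ∀ x, f x ∈ unitary (HA →L[ℂ] HA))
    (ψ : TensorProduct ℂ HA HB)
    (hrep : ∀ x y : G,
      (LinearMap.rTensor HB ((star (f y) * f x * f (x⁻¹ * y) : HA →L[ℂ] HA) : HA →ₗ[ℂ] HA)) ψ = ψ) :
    (∀ x y : G,
      (LinearMap.rTensor HB ((f x * f y : HA →L[ℂ] HA) : HA →ₗ[ℂ] HA)) ψ =
        (LinearMap.rTensor HB ((f (x * y) : HA →L[ℂ] HA) : HA →ₗ[ℂ] HA)) ψ) ∧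
    (∀ x : G, ∀ v ∈ Submodule.span ℂ
        {v : TensorProduct ℂ HA HB | ∃ g : G,
          v = (LinearMap.rTensor HB ((f g : HA →L[ℂ] HA) : HA →ₗ[ℂ] HA)) ψ},
      (LinearMap.rTensor HB ((f x : HA →L[ℂ] HA) : HA →ₗ[ℂ] HA)) v ∈ Submodule.span ℂ
        {v : TensorProduct ℂ HA HB | ∃ g : G,
          v = (LinearMap.rTensor HB ((f g : HA →L[ℂ] HA) : HA →ₗ[ℂ] HA)) ψ}) ∧
    (∀ v ∈ Submodule.span ℂ
        {v : TensorProduct ℂ HA HB | ∃ g : G,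
          v = (LinearMap.rTensor HB ((f g : HA →L[ℂ] HA) : HA →ₗ[ℂ] HA)) ψ},
      (LinearMap.rTensor HB ((f 1 : HA →L[ℂ] HA) : HA →ₗ[ℂ] HA)) v = v) ∧
    (∀ x y : G, ∀ v ∈ Submodule.span ℂ
        {v : TensorProduct ℂ HA HB | ∃ g : G,
          v = (LinearMap.rTensor HB ((f g : HA →L[ℂ] HA) : HA →ₗ[ℂ] HA)) ψ},
      (LinearMap.rTensor HB ((f x : HA →L[ℂ] HA) : HA →ₗ[ℂ] HA))
          ((LinearMap.rTensor HB ((f y : HA →L[ℂ] HA) : HA →ₗ[ℂ] HA)) v) =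
        (LinearMap.rTensor HB ((f (x * y) : HA →L[ℂ] HA) : HA →ₗ[ℂ] HA)) v) := by
  let ρ : (HA →L[ℂ] HA) →* Module.End ℂ (HA ⊗[ℂ] HB) :=
    (Module.End.rTensorAlgHom ℂ HA HB).toMonoidHom.comp
      ContinuousLinearMap.toLinearMapRingHom.toMonoidHom
  have hmul := apply_mul_eq_apply_of_apply_star_mul_mul_eq ρ hf hrep
  exact ⟨hmul, fun x _ => apply_mem_orbitSpan hmul x,
    fun _ => apply_one_eq_self_of_mem_orbitSpan hmul,
    fun x y _ => apply_apply_eq_apply_mul_of_mem_orbitSpan hmul x y⟩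

theorem stmt_19 {G : Type*} [Group G] [Finite G]
    {HA HB : Type*} [NormedAddCommGroup HA] [InnerProductSpace ℂ HA]
    [FiniteDimensional ℂ HA] [CompleteSpace HA]
    [NormedAddCommGroup HB] [InnerProductSpace ℂ HB] [FiniteDimensional ℂ HB]
    (f : G → (HA →L[ℂ] HA)) (hf : ∀ x, f x ∈ unitary (HA →L[ℂ] HA))
    (ψ : TensorProduct ℂ HA HB)
    (hrep : ∀ x y : G,
      (LinearMap.rTensor HB ((star (f y) * f x * f (x⁻¹ * y) : HA →L[ℂ] HA) : HA →ₗ[ℂ] HA)) ψ = ψ) :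
    (∀ x y : G,
      (LinearMap.rTensor HB ((f x * f y : HA →L[ℂ] HA) : HA →ₗ[ℂ] HA)) ψ =
        (LinearMap.rTensor HB ((f (x * y) : HA →L[ℂ] HA) : HA →ₗ[ℂ] HA)) ψ) ∧
    (∀ x : G, ∀ v ∈ Submodule.span ℂ
        {v : TensorProduct ℂ HA HB | ∃ g : G,
          v = (LinearMap.rTensor HB ((f g : HA →L[ℂ] HA) : HA →ₗ[ℂ] HA)) ψ},
      (LinearMap.rTensor HB ((f x : HA →L[ℂ] HA) : HA →ₗ[ℂ] HA)) v ∈ Submodule.span ℂ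
        {v : TensorProduct ℂ HA HB | ∃ g : G,
          v = (LinearMap.rTensor HB ((f g : HA →L[ℂ] HA) : HA →ₗ[ℂ] HA)) ψ}) ∧
    (∀ v ∈ Submodule.span ℂ
        {v : TensorProduct ℂ HA HB | ∃ g : G,
          v = (LinearMap.rTensor HB ((f g : HA →L[ℂ] HA) : HA →ₗ[ℂ] HA)) ψ},
      (LinearMap.rTensor HB ((f 1 : HA →L[ℂ] HA) : HA →ₗ[ℂ] HA)) v = v) ∧
    (∀ x y : G, ∀ v ∈ Submodule.span ℂ
        {v : TensorProduct ℂ HA HB | ∃ g : G,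
          v = (LinearMap.rTensor HB ((f g : HA →L[ℂ] HA) : HA →ₗ[ℂ] HA)) ψ},
      (LinearMap.rTensor HB ((f x : HA →L[ℂ] HA) : HA →ₗ[ℂ] HA))
          ((LinearMap.rTensor HB ((f y : HA →L[ℂ] HA) : HA →ₗ[ℂ] HA)) v) =
        (LinearMap.rTensor HB ((f (x * y) : HA →L[ℂ] HA) : HA →ₗ[ℂ] HA)) v) :=
  stmt_19_general f hf ψ hrep
end
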